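/- arXiv:1707.06868 — 5 statements merged into one kernel-verified Lean document; each statement's English description precedes it below -/
import Mathlib

section
/- Every finite strongly Mal'cev nilpotent semigroup is a block group all of whose subgroups are nilpotent; moreover, the inclusion is strict: there exists a finite block group, all of whose subgroups are nilpotent, that is not strongly Mal'cev nilpotent. -/
namespace SMN

variable {S : Type*}

/-- Mal'cev sequences `(λ_n, ρ_n)`; `z k` plays the role of `z_{k+1}`. -/
def lr [Mul S] (x y : S) (z : ℕ → S) : ℕ → S × S
  | 0 => (x, y)
  | n + 1 =>
    let p := lr x y z n
    (p.1 * z n * p.2, p.2 * z n * p.1)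

/-- Cyclic shift by `k` in `Fin t`. -/
def cyc {t : ℕ} (i : Fin t) (k : ℕ) : Fin t :=
  ⟨(i.val + k) % t, Nat.mod_lt _ i.pos⟩

/-- Strong Mal'cev sequences `λ_{n,i}`; `z k` plays the role of `z_{k+1}`. -/
def slam [Mul S] {t : ℕ} (x : Fin t → S) (z : ℕ → S) : ℕ → Fin t → S
  | 0 => x
  | n + 1 =>
    let f := slam x z n
    fun i => (List.range (t - 1)).foldl (fun acc j => acc * z n * f (cyc i (j + 1))) (f i)

/-- A semigroup is Mal'cev nilpotent if for some `n ≥ 1`,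
`λ_n = ρ_n` for all `x, y ∈ S` and `z₁, …, z_n ∈ S¹`. -/
def MalcevNilpotent (S : Type*) [Semigroup S] : Prop :=
  ∃ n : ℕ, 1 ≤ n ∧ ∀ (x y : S) (z : ℕ → WithOne S),
    (lr (x : WithOne S) (y : WithOne S) z n).1 = (lr (x : WithOne S) (y : WithOne S) z n).2

/-- Strong Mal'cev nilpotency at level `n`. -/
def SMNAt (S : Type*) [Semigroup S] (n : ℕ) : Prop :=
  ∀ t : ℕ, 2 ≤ t → ∀ (x : Fin t → S) (z : ℕ → WithOne S) (i j : Fin t),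
    slam (fun k => (x k : WithOne S)) z n i = slam (fun k => (x k : WithOne S)) z n j

/-- A semigroup is strongly Mal'cev nilpotent if for some `n ≥ 1`, for every `t ≥ 2`,
`λ_{n,1} = ⋯ = λ_{n,t}` for all `x₁, …, x_t ∈ S` and `z₁, …, z_n ∈ S¹`. -/
def StronglyMalcevNilpotent (S : Type*) [Semigroup S] : Prop :=
  ∃ n : ℕ, 1 ≤ n ∧ SMNAt S n

/-- `y` is an inverse of `x`. -/
def IsInverseOf [Semigroup S] (y x : S) : Prop := x * y * x = x ∧ y * x * y = y

/-- A block group: every element has at most one inverse. -/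
def BlockGroup (S : Type*) [Semigroup S] : Prop :=
  ∀ x y₁ y₂ : S, IsInverseOf y₁ x → IsInverseOf y₂ x → y₁ = y₂

/-- All subgroups (subsemigroups which are groups) of `S` are nilpotent. -/
def AllSubgroupsNilpotent (S : Type*) [Semigroup S] : Prop :=
  ∀ (G : Type) [Group G], ∀ φ : G → S,
    (∀ a b : G, φ (a * b) = φ a * φ b) → Function.Injective φ → Group.IsNilpotent G

/-- All subgroups (subsemigroups which are groups) of `S` are trivial. -/
def AllSubgroupsTrivial (S : Type*) [Semigroup S] : Prop :=
  ∀ (G : Type) [Group G], ∀ φ : G → S,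
    (∀ a b : G, φ (a * b) = φ a * φ b) → Function.Injective φ → ∀ g : G, g = 1

end SMN

/-!
With every `z_k = 1`, the Mal'cev sequence of a pair `x, y` with `{x y, y x} = {x, y}` just
alternates between `(x, y)` and `(y, x)`, so a Mal'cev nilpotent semigroup has no such pair with
`x ≠ y`. If `y₁, y₂` are inverses of `x`, then `x y₁, x y₂` and `y₁ x, y₂ x` are such pairs, whence
`y₁ = y₁ x y₁ = y₂ x y₂ = y₂`. In a group, the identity at level `n + 1` says
`λ_n c ρ_n = ρ_n c λ_n` for every `c`, i.e. `λ_n ≡ ρ_n` modulo the centre, so the quotient by the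
centre satisfies the identity at level `n` and induction gives nilpotency. Strong Mal'cev
nilpotency specialises to Mal'cev nilpotency at `t = 2`.

For strictness, the symmetric inverse monoid on two points is an inverse semigroup whose subgroups
have exponent at most `2`, while with `z` alternating between the transposition and `1` the pair
`(e₁₁, e₂₂)` runs through the cycle `(e₁₁, e₂₂) → (e₁₂, e₂₁) → (e₁₁, e₂₂)`.
-/

namespace SMN

section Sequences

variable {M : Type*} [Mul M]

theorem lr_succ (x y : M) (z : ℕ → M) (n : ℕ) :
    lr x y z (n + 1) = ((lr x y z n).1 * z n * (lr x y z n).2,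
      (lr x y z n).2 * z n * (lr x y z n).1) := rfl

theorem lr_congr {x y : M} {z z' : ℕ → M} {n : ℕ} (h : ∀ k < n, z k = z' k) :
    lr x y z n = lr x y z' n := by
  induction n with
  | zero => rfl
  | succ n ih => rw [lr_succ, lr_succ, ih fun k hk => h k (by omega), h n n.lt_succ_self]

theorem lr_update_succ (x y : M) (z : ℕ → M) (n : ℕ) (c : M) :
    lr x y (Function.update z n c) (n + 1) =
      ((lr x y z n).1 * c * (lr x y z n).2, (lr x y z n).2 * c * (lr x y z n).1) := by
  rw [lr_succ, Function.update_self,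
    lr_congr fun k hk => Function.update_of_ne (Nat.ne_of_lt hk) c z]

theorem lr_map {F N : Type*} [Mul N] [FunLike F M N] [MulHomClass F M N] (f : F)
    (x y : M) (z : ℕ → M) (n : ℕ) :
    lr (f x) (f y) (f ∘ z) n = Prod.map f f (lr x y z n) := by
  induction n with
  | zero => rfl
  | succ n ih => simp only [lr_succ, ih, Prod.map, Function.comp_apply, map_mul]

theorem slam_two (x : Fin 2 → M) (z : ℕ → M) (n : ℕ) :
    (slam x z n 0, slam x z n 1) = lr (x 0) (x 1) z n := by
  induction n with
  | zero => rfl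
  | succ n ih => rw [lr_succ, ← ih]; rfl

end Sequences

theorem SMNAt.lr_fst_eq_snd {S : Type*} [Semigroup S] {n : ℕ} (h : SMNAt S n) (x y : S)
    (z : ℕ → WithOne S) : (lr (x : WithOne S) y z n).1 = (lr (x : WithOne S) y z n).2 := by
  have hs := slam_two (fun k => ((![x, y] k : S) : WithOne S)) z n
  exact (congrArg Prod.fst hs).symm.trans
    ((h 2 le_rfl ![x, y] z 0 1).trans (congrArg Prod.snd hs))

theorem StronglyMalcevNilpotent.malcevNilpotent {S : Type*} [Semigroup S]
    (h : StronglyMalcevNilpotent S) : MalcevNilpotent S :=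
  let ⟨n, hn, hS⟩ := h
  ⟨n, hn, hS.lr_fst_eq_snd⟩

section Group

variable {G : Type*} [Group G]

theorem div_mem_center_of_forall_mul_mul_eq {l r : G} (h : ∀ c, l * c * r = r * c * l) :
    r / l ∈ Subgroup.center G := by
  refine Subgroup.mem_center_iff.mpr fun g => ?_
  calc g * (r / l) = l * (l⁻¹ * g) * r * l⁻¹ := by rw [div_eq_mul_inv]; group
    _ = r * (l⁻¹ * g) * l * l⁻¹ := by rw [h]
    _ = r / l * g := by rw [div_eq_mul_inv]; group

theorem lr_fst_eq_snd_quotient_center {n : ℕ}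
    (h : ∀ (x y : G) (z : ℕ → G), (lr x y z (n + 1)).1 = (lr x y z (n + 1)).2)
    (x y : G ⧸ Subgroup.center G) (z : ℕ → G ⧸ Subgroup.center G) :
    (lr x y z n).1 = (lr x y z n).2 := by
  obtain ⟨a, rfl⟩ := QuotientGroup.mk'_surjective (Subgroup.center G) x
  obtain ⟨b, rfl⟩ := QuotientGroup.mk'_surjective (Subgroup.center G) y
  obtain ⟨w, rfl⟩ := (QuotientGroup.mk'_surjective (Subgroup.center G)).comp_left z
  rw [lr_map]
  refine (QuotientGroup.eq_iff_div_mem.mpr (div_mem_center_of_forall_mul_mul_eq fun c => ?_)).symm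
  simpa only [lr_update_succ] using h a b (Function.update w n c)

theorem Group.isNilpotent_of_forall_lr_fst_eq_snd (n : ℕ)
    (h : ∀ (x y : G) (z : ℕ → G), (lr x y z n).1 = (lr x y z n).2) : Group.IsNilpotent G := by
  induction n generalizing G with
  | zero =>
    have : Subsingleton G := ⟨fun x y => h x y 1⟩
    infer_instance
  | succ n ih => exact Group.of_quotient_center_nilpotent (ih (lr_fst_eq_snd_quotient_center h))

end Group

theorem lr_one_eq_or_eq_swap {M : Type*} [MulOneClass M] {x y : M}
    (h : x * y = x ∧ y * x = y ∨ x * y = y ∧ y * x = x) (n : ℕ) :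
    lr x y 1 n = (x, y) ∨ lr x y 1 n = (y, x) := by
  induction n with
  | zero => exact Or.inl rfl
  | succ n ih =>
    rcases ih with ih | ih <;>
      simp only [lr_succ, ih, Pi.one_apply, mul_one, Prod.ext_iff] <;> tauto

section Semigroup

variable {S : Type*} [Semigroup S]

theorem MalcevNilpotent.eq_of_mul_eq (hS : MalcevNilpotent S) {x y : S}
    (h : x * y = x ∧ y * x = y ∨ x * y = y ∧ y * x = x) : x = y := by
  obtain ⟨n, -, hS⟩ := hS
  have h' : (x : WithOne S) * y = x ∧ (y : WithOne S) * x = y ∨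
      (x : WithOne S) * y = y ∧ (y : WithOne S) * x = x := by
    simpa only [← WithOne.coe_mul, WithOne.coe_inj] using h
  have hxy := hS x y 1
  rcases lr_one_eq_or_eq_swap h' n with hn | hn <;> rw [hn] at hxy
  exacts [WithOne.coe_inj.mp hxy, (WithOne.coe_inj.mp hxy).symm]

theorem MalcevNilpotent.blockGroup (hS : MalcevNilpotent S) : BlockGroup S := by
  rintro x y₁ y₂ ⟨hx₁, hy₁⟩ ⟨hx₂, hy₂⟩
  have hxy : x * y₁ = x * y₂ := hS.eq_of_mul_eq <| .inr
    ⟨by rw [← mul_assoc, hx₁], by rw [← mul_assoc, hx₂]⟩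
  have hyx : y₁ * x = y₂ * x := hS.eq_of_mul_eq <| .inl
    ⟨by rw [mul_assoc y₁, ← mul_assoc x, hx₂],
      by rw [mul_assoc y₂, ← mul_assoc x, hx₁]⟩
  calc y₁ = y₁ * x * y₁ := hy₁.symm
    _ = y₂ * x * y₂ := by rw [hyx, mul_assoc, hxy, ← mul_assoc]
    _ = y₂ := hy₂

theorem MalcevNilpotent.allSubgroupsNilpotent (hS : MalcevNilpotent S) :
    AllSubgroupsNilpotent S := by
  intro G _ φ hφ hinj
  obtain ⟨n, -, hS⟩ := hS
  let f : G →ₙ* WithOne S := WithOne.coeMulHom.comp ⟨φ, hφ⟩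
  refine Group.isNilpotent_of_forall_lr_fst_eq_snd n fun a b w => hinj ?_
  have hfab : lr (f a) (f b) (f ∘ w) n = _ := lr_map f a b w n
  exact WithOne.coe_inj.mp ((congrArg Prod.fst hfab).symm.trans
    ((hS (φ a) (φ b) (f ∘ w)).trans (congrArg Prod.snd hfab)))

end Semigroup

/-- The symmetric inverse monoid on two points, as `2 × 2` rook matrices: `e i j` is the matrix
unit, `swap` the transposition matrix. -/
inductive Rook2 : Type
  | one | swap | e11 | e12 | e21 | e22 | zero
  deriving DecidableEq

namespace Rook2

instance : Fintype Rook2 :=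
  Fintype.ofList [one, swap, e11, e12, e21, e22, zero] fun x => by cases x <;> decide

def mul : Rook2 → Rook2 → Rook2
  | zero, _ => zero
  | _, zero => zero
  | one, a => a
  | a, one => a
  | swap, swap => one
  | swap, e11 => e21 | swap, e12 => e22 | swap, e21 => e11 | swap, e22 => e12
  | e11, swap => e12 | e12, swap => e11 | e21, swap => e22 | e22, swap => e21
  | e11, e11 => e11 | e11, e12 => e12 | e11, e21 => zero | e11, e22 => zero
  | e12, e11 => zero | e12, e12 => zero | e12, e21 => e11 | e12, e22 => e12
  | e21, e11 => e21 | e21, e12 => e22 | e21, e21 => zero | e21, e22 => zero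
  | e22, e11 => zero | e22, e12 => zero | e22, e21 => e21 | e22, e22 => e22

instance : Semigroup Rook2 where
  mul := mul
  mul_assoc := by decide

theorem blockGroup : BlockGroup Rook2 := by
  unfold BlockGroup IsInverseOf
  decide

theorem mul_self_eq_of_mul_eq {e a b : Rook2} (ha : e * a = a) (hab : a * b = e)
    (hba : b * a = e) : a * a = e := by
  revert e a b
  decide

theorem allSubgroupsNilpotent : AllSubgroupsNilpotent Rook2 := by
  intro G _ φ hφ hinj
  have hsq : ∀ g : G, g ^ 2 = 1 := fun g => hinj <| by
    simpa only [pow_two, hφ, mul_inv_cancel, inv_mul_cancel, one_mul] using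
      mul_self_eq_of_mul_eq (e := φ 1) (b := φ g⁻¹) (by rw [← hφ, one_mul])
        (by rw [← hφ, mul_inv_cancel]) (by rw [← hφ, inv_mul_cancel])
  let _ : CommGroup G :=
    { mul_comm := Commute.of_orderOf_dvd_two fun g => orderOf_dvd_of_pow_eq_one (hsq g) }
  infer_instance

def alternating : ℕ → WithOne Rook2 := fun k => if Even k then (swap : WithOne Rook2) else 1

theorem lr_alternating (n : ℕ) :
    lr (e11 : WithOne Rook2) e22 alternating n =
      if Even n then ((e11 : WithOne Rook2), (e22 : WithOne Rook2)) else (e12, e21) := by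
  induction n with
  | zero => rfl
  | succ n ih =>
    by_cases hn : Even n <;>
      simp only [lr_succ, ih, alternating, hn, Nat.even_add_one, if_true, if_false,
        not_true, not_false_eq_true] <;> rfl

theorem not_malcevNilpotent : ¬ MalcevNilpotent Rook2 := by
  rintro ⟨n, -, h⟩
  have hn := h e11 e22 alternating
  rw [lr_alternating] at hn
  split_ifs at hn <;> exact absurd (WithOne.coe_inj.mp hn) (by decide)

end Rook2

/-- Every finite strongly Mal'cev nilpotent semigroup is a block group all of whose
subgroups are nilpotent, and the inclusion is strict: some finite block group with all
subgroups nilpotent is not strongly Mal'cev nilpotent. -/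
theorem stmt3 :
    (∀ (S : Type) [Semigroup S] [Finite S],
        StronglyMalcevNilpotent S → BlockGroup S ∧ AllSubgroupsNilpotent S) ∧
    ∃ (T : Type) (instT : Semigroup T), Finite T ∧ @BlockGroup T instT ∧
      @AllSubgroupsNilpotent T instT ∧ ¬ @StronglyMalcevNilpotent T instT :=
  ⟨fun _ _ _ hS => ⟨hS.malcevNilpotent.blockGroup, hS.malcevNilpotent.allSubgroupsNilpotent⟩,
    Rook2, inferInstance, inferInstance, Rook2.blockGroup, Rook2.allSubgroupsNilpotent,
    fun hS => Rook2.not_malcevNilpotent hS.malcevNilpotent⟩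

end SMN
end

section
/- Let S be a finite semigroup such that (1) S is a block group all of whose subgroups are nilpotent, and (2) for every subgroup G of S and every g ∈ G with g ≠ 1_G one has g² ≠ 1_G. Suppose there exists a regular R-class X of S that is not nilpotent in S, i.e., there are elements α, α′, β, β′ ∈ X with α ≠ α′ such that some s ∈ S satisfies βs = α and β′s = α′, and some s′ ∈ S satisfies β′s′ = α and βs′ = α′. Then S is not Mal'cev nilpotent. -/
namespace SMN

/-- Green's relation `R`: `x R y` iff `xS¹ = yS¹`. -/
def RRel {S : Type*} [Semigroup S] (x y : S) : Prop :=
  (∃ u : WithOne S, (x : WithOne S) * u = (y : WithOne S)) ∧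
  (∃ u : WithOne S, (y : WithOne S) * u = (x : WithOne S))

/-- Green's relation `L`: `x L y` iff `S¹x = S¹y`. -/
def LRel {S : Type*} [Semigroup S] (x y : S) : Prop :=
  (∃ u : WithOne S, u * (x : WithOne S) = (y : WithOne S)) ∧
  (∃ u : WithOne S, u * (y : WithOne S) = (x : WithOne S))

/-- Green's relation `J`: `x J y` iff `S¹xS¹ = S¹yS¹`. -/
def JRel {S : Type*} [Semigroup S] (x y : S) : Prop :=
  (∃ u v : WithOne S, u * (x : WithOne S) * v = (y : WithOne S)) ∧
  (∃ u v : WithOne S, u * (y : WithOne S) * v = (x : WithOne S))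

/-- Green's relation `H = R ∩ L`. -/
def HRel {S : Type*} [Semigroup S] (x y : S) : Prop := RRel x y ∧ LRel x y

/-- `X` is an `R`-class of `S`. -/
def IsRClass {S : Type*} [Semigroup S] (X : Set S) : Prop :=
  ∃ x₀ : S, X = {y : S | RRel y x₀}

/-- An element `x` of a semigroup is regular. -/
def IsRegularElem {S : Type*} [Semigroup S] (x : S) : Prop := ∃ y : S, x * y * x = x

/-- `X` is a regular `R`-class of `S`. -/
def IsRegularRClass {S : Type*} [Semigroup S] (X : Set S) : Prop :=
  IsRClass X ∧ ∃ x ∈ X, IsRegularElem x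



private lemma tri {S : Type*} [Semigroup S] (p x t y q r : S)
    (h1 : x * t = y) (h2 : y * q * r = r) :
    (p * x) * t * (q * r) = p * r := by
  have : (p * x) * t * (q * r) = p * ((x * t) * q * r) := by
    simp only [mul_assoc]
  rw [this, h1, h2]

/-- Let `S` be a finite block group with all subgroups nilpotent, whose subgroups contain
no elements of order 2. If some regular `R`-class `X` of `S` is not nilpotent in `S`
(witnessed by `α ≠ α'` and `β, β'` in `X`, `s` with `βs = α, β's = α'`, and `s'` with
`β's' = α, βs' = α'`), then `S` is not Mal'cev nilpotent. -/
theorem stmt9 (S : Type*) [Semigroup S] [Finite S]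
    (hbg : BlockGroup S) (hnil : AllSubgroupsNilpotent S)
    (hsq : ∀ (G : Type) [Group G], ∀ φ : G → S,
      (∀ a b : G, φ (a * b) = φ a * φ b) → Function.Injective φ →
        ∀ g : G, g ≠ 1 → g * g ≠ 1)
    (hX : ∃ X : Set S, IsRegularRClass X ∧
      ∃ α ∈ X, ∃ α' ∈ X, ∃ β ∈ X, ∃ β' ∈ X, α ≠ α' ∧
        (∃ s : S, β * s = α ∧ β' * s = α') ∧
        (∃ s' : S, β' * s' = α ∧ β * s' = α')) :
    ¬ MalcevNilpotent S := by
  intro hMN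
  obtain ⟨X, ⟨⟨x₀, hX0⟩, xh, hxhX, yh, hyh⟩, α, hα, α', hα', β, hβ, β', hβ', hne,
    ⟨s, hs1, hs2⟩, ⟨s', hs'1, hs'2⟩⟩ := hX
  -- connectivity within the R-class
  have conn : ∀ x ∈ X, ∀ y ∈ X, ∃ u : WithOne S, (x : WithOne S) * u = (y : WithOne S) := by
    intro x hx y hy
    rw [hX0] at hx hy
    obtain ⟨⟨u1, hu1⟩, -⟩ := hx
    obtain ⟨-, ⟨u2, hu2⟩⟩ := hy
    exact ⟨u1 * u2, by rw [← mul_assoc, hu1, hu2]⟩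
  -- every element of X is regular
  have regOf : ∀ x ∈ X, ∃ z : S, x * z * x = x := by
    intro x hx
    obtain ⟨p, hp⟩ := conn xh hxhX x hx
    obtain ⟨q, hq⟩ := conn x hx xh hxhX
    have key : (x : WithOne S) * (q * (yh : WithOne S)) * (x : WithOne S) = (x : WithOne S) := by
      have hxh : (xh : WithOne S) * (yh : WithOne S) * (xh : WithOne S) = (xh : WithOne S) := by
        have := congrArg (fun t : S => (t : WithOne S)) hyh
        simpa using this
      calc (x : WithOne S) * (q * (yh : WithOne S)) * (x : WithOne S)
          = ((x : WithOne S) * q) * (yh : WithOne S) * (x : WithOne S) := by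
            simp only [mul_assoc]
        _ = (xh : WithOne S) * (yh : WithOne S) * (x : WithOne S) := by rw [hq]
        _ = (xh : WithOne S) * (yh : WithOne S) * ((xh : WithOne S) * p) := by rw [hp]
        _ = ((xh : WithOne S) * (yh : WithOne S) * (xh : WithOne S)) * p := by
            simp only [mul_assoc]
        _ = (xh : WithOne S) * p := by rw [hxh]
        _ = (x : WithOne S) := hp
    by_cases hq1 : q = 1
    · refine ⟨yh, ?_⟩
      rw [hq1, one_mul] at key
      exact_mod_cast key
    · obtain ⟨a, ha⟩ := WithOne.ne_one_iff_exists.1 hq1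
      refine ⟨a * yh, ?_⟩
      rw [← ha] at key
      exact_mod_cast key
  obtain ⟨zα, hzα⟩ := regOf α hα
  obtain ⟨zα', hzα'⟩ := regOf α' hα'
  -- the idempotents α*zα and α'*zα' are left identities on X
  have lid : ∀ (a z : S), a * z * a = a → a ∈ X → ∀ x ∈ X, a * z * x = x := by
    intro a z hz ha x hx
    obtain ⟨w, hw⟩ := conn a ha x hx
    have : ((a * z * x : S) : WithOne S) = (x : WithOne S) := by
      push_cast
      calc (a : WithOne S) * z * x = (a : WithOne S) * z * ((a : WithOne S) * w) := by
            rw [hw]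
        _ = ((a : WithOne S) * z * a) * w := by simp only [mul_assoc]
        _ = (((a * z * a : S) : WithOne S)) * w := by push_cast; ring_nf
        _ = (a : WithOne S) * w := by rw [hz]
        _ = (x : WithOne S) := hw
    exact_mod_cast this
  have eβ : α * zα * β = β := lid α zα hzα hα β hβ
  have eβ' : α * zα * β' = β' := lid α zα hzα hα β' hβ'
  have eα' : α * zα * α' = α' := lid α zα hzα hα α' hα'
  have e'β : α' * zα' * β = β := lid α' zα' hzα' hα' β hβ
  have e'β' : α' * zα' * β' = β' := lid α' zα' hzα' hα' β' hβ'
  have e'α : α' * zα' * α = α := lid α' zα' hzα' hα' α hα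
  -- the four witnesses
  set u : S := zα * β with hu
  set v : S := zα' * β' with hv
  set u' : S := zα * β' with hu'
  set v' : S := zα' * β with hv'
  have id1 : u * s' * v = u' := tri zα β s' α' zα' β' hs'2 e'β'
  have id2 : v * s' * u = v' := tri zα' β' s' α zα β hs'1 eβ
  have id3 : u' * s * v' = u := tri zα β' s α' zα' β hs2 e'β
  have id4 : v' * s * u' = v := tri zα' β s α zα β' hs1 eβ'
  -- core contradiction machine : zα*α = zα'*α' and zα*α' = zα'*α is impossible
  have core : zα * α = zα' * α' → zα * α' = zα' * α → False := by
    intro h1 h2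
    have hff : (zα * α) * (zα * α) = zα * α := by
      calc zα * α * (zα * α) = zα * (α * zα * α) := by simp only [mul_assoc]
        _ = zα * α := by rw [hzα]
    have hfw : (zα * α) * (zα * α') = zα * α' := by
      calc zα * α * (zα * α') = zα * (α * zα * α') := by simp only [mul_assoc]
        _ = zα * α' := by rw [eα']
    have hwf : (zα * α') * (zα * α) = zα * α' := by
      calc (zα * α') * (zα * α) = (zα' * α) * (zα * α) := by rw [h2]
        _ = zα' * (α * zα * α) := by simp only [mul_assoc]
        _ = zα' * α := by rw [hzα]
        _ = zα * α' := h2.symm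
    have hwwf : (zα * α') * (zα * α') = zα * α := by
      nth_rewrite 2 [h2]
      calc zα * α' * (zα' * α) = zα * (α' * zα' * α) := by simp only [mul_assoc]
        _ = zα * α := by rw [e'α]
    have hwnef : zα * α' ≠ zα * α := by
      intro h
      apply hne
      have h3 : α * (zα * α) = α * (zα * α') := by rw [← h]
      have h4 : α * zα * α = α * zα * α' := by
        rw [mul_assoc, mul_assoc]; exact h3
      rw [hzα, eα'] at h4
      exact h4
    -- build a subgroup of order 2
    set φ : Multiplicative (ZMod 2) → S :=
      fun g => if g = 1 then zα * α else zα * α' with hφ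
    have hcases : ∀ g : Multiplicative (ZMod 2),
        g = 1 ∨ g = Multiplicative.ofAdd 1 := by decide
    have hone : (Multiplicative.ofAdd (1 : ZMod 2)) ≠ 1 := by decide
    have hmulself : (Multiplicative.ofAdd (1 : ZMod 2)) *
        (Multiplicative.ofAdd (1 : ZMod 2)) = 1 := by decide
    have hhom : ∀ a b : Multiplicative (ZMod 2), φ (a * b) = φ a * φ b := by
      intro a b
      rcases hcases a with ha | ha <;> rcases hcases b with hb | hb <;>
        subst ha <;> subst hb <;>
        simp only [hφ, one_mul, mul_one, hmulself, if_pos rfl, if_neg hone]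
      · exact hff.symm
      · exact hfw.symm
      · exact hwf.symm
      · exact hwwf.symm
    have hinj : Function.Injective φ := by
      intro a b hab
      rcases hcases a with ha | ha <;> rcases hcases b with hb | hb <;>
        subst ha <;> subst hb <;>
        simp only [hφ, if_pos rfl, if_neg hone] at hab ⊢ <;>
        first
          | rfl
          | exact absurd hab.symm hwnef
          | exact absurd hab hwnef
    exact hsq (Multiplicative (ZMod 2)) φ hhom hinj
      (Multiplicative.ofAdd 1) hone hmulself
  -- distinctness of the two pairs
  have huv : u ≠ v := by
    intro h
    apply core
    · calc zα * α = zα * (β * s) := by rw [hs1]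
        _ = (zα * β) * s := by rw [mul_assoc]
        _ = (zα' * β') * s := by rw [← hu, ← hv, h]
        _ = zα' * (β' * s) := by rw [mul_assoc]
        _ = zα' * α' := by rw [hs2]
    · calc zα * α' = zα * (β * s') := by rw [hs'2]
        _ = (zα * β) * s' := by rw [mul_assoc]
        _ = (zα' * β') * s' := by rw [← hu, ← hv, h]
        _ = zα' * (β' * s') := by rw [mul_assoc]
        _ = zα' * α := by rw [hs'1]
  have hu'v' : u' ≠ v' := by
    intro h
    apply core
    · calc zα * α = zα * (β' * s') := by rw [hs'1]
        _ = (zα * β') * s' := by rw [mul_assoc]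
        _ = (zα' * β) * s' := by rw [← hu', ← hv', h]
        _ = zα' * (β * s') := by rw [mul_assoc]
        _ = zα' * α' := by rw [hs'2]
    · calc zα * α' = zα * (β' * s) := by rw [hs2]
        _ = (zα * β') * s := by rw [mul_assoc]
        _ = (zα' * β) * s := by rw [← hu', ← hv', h]
        _ = zα' * (β * s) := by rw [mul_assoc]
        _ = zα' * α := by rw [hs1]
  -- the Mal'cev chain that never closes
  obtain ⟨n, -, hn⟩ := hMN
  set zseq : ℕ → WithOne S := fun k => if k % 2 = 0 then (s' : WithOne S) else (s : WithOne S)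
    with hzseq
  have claim : ∀ k, lr (u : WithOne S) (v : WithOne S) zseq k =
      if k % 2 = 0 then ((u : WithOne S), (v : WithOne S))
      else ((u' : WithOne S), (v' : WithOne S)) := by
    intro k
    induction k with
    | zero => simp [lr]
    | succ k ih =>
      have hlr : lr (u : WithOne S) (v : WithOne S) zseq (k+1) =
          ((lr (u : WithOne S) (v : WithOne S) zseq k).1 * zseq k *
            (lr (u : WithOne S) (v : WithOne S) zseq k).2,
           (lr (u : WithOne S) (v : WithOne S) zseq k).2 * zseq k *
            (lr (u : WithOne S) (v : WithOne S) zseq k).1) := rfl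
      rcases Nat.mod_two_eq_zero_or_one k with hk | hk
      · have hk1 : (k + 1) % 2 = 1 := by omega
        have hz : zseq k = (s' : WithOne S) := by simp [hzseq, hk]
        rw [hlr, ih, hz, if_pos hk, if_neg (by omega : ¬ (k+1) % 2 = 0)]
        have c1 : ((u : WithOne S), (v : WithOne S)).1 * (s' : WithOne S) *
            ((u : WithOne S), (v : WithOne S)).2 = (u' : WithOne S) := by
          show (u : WithOne S) * (s' : WithOne S) * (v : WithOne S) = (u' : WithOne S)
          exact_mod_cast congrArg (fun t : S => (t : WithOne S)) id1
        have c2 : ((u : WithOne S), (v : WithOne S)).2 * (s' : WithOne S) *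
            ((u : WithOne S), (v : WithOne S)).1 = (v' : WithOne S) := by
          show (v : WithOne S) * (s' : WithOne S) * (u : WithOne S) = (v' : WithOne S)
          exact_mod_cast congrArg (fun t : S => (t : WithOne S)) id2
        rw [c1, c2]
      · have hk1 : (k + 1) % 2 = 0 := by omega
        have hz : zseq k = (s : WithOne S) := by simp [hzseq, hk]
        rw [hlr, ih, hz, if_neg (by omega : ¬ k % 2 = 0), if_pos hk1]
        have c1 : ((u' : WithOne S), (v' : WithOne S)).1 * (s : WithOne S) *
            ((u' : WithOne S), (v' : WithOne S)).2 = (u : WithOne S) := by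
          show (u' : WithOne S) * (s : WithOne S) * (v' : WithOne S) = (u : WithOne S)
          exact_mod_cast congrArg (fun t : S => (t : WithOne S)) id3
        have c2 : ((u' : WithOne S), (v' : WithOne S)).2 * (s : WithOne S) *
            ((u' : WithOne S), (v' : WithOne S)).1 = (v : WithOne S) := by
          show (v' : WithOne S) * (s : WithOne S) * (u' : WithOne S) = (v : WithOne S)
          exact_mod_cast congrArg (fun t : S => (t : WithOne S)) id4
        rw [c1, c2]
  have := hn u v zseq
  rw [claim n] at this
  rcases Nat.mod_two_eq_zero_or_one n with hn2 | hn2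
  · rw [if_pos hn2] at this
    have h2 : (u : WithOne S) = (v : WithOne S) := this
    exact huv (WithOne.coe_inj.mp h2)
  · rw [if_neg (by omega : ¬ n % 2 = 0)] at this
    have h2 : (u' : WithOne S) = (v' : WithOne S) := this
    exact hu'v' (WithOne.coe_inj.mp h2)


end SMN
end

section
/- Let p be a prime number. Let Ω = {α₁,…,α_p,β₁,…,β_p} be a set of 2p distinct points, and consider partial transformations of Ω (equivalently, total maps on Ω ∪ {θ} fixing θ, where θ denotes 'undefined'). Let X_{p,i} be the partial transformation with domain {α_i} sending α_i to β_i, and let W_{p,i} be the partial transformation with domain {β₁,…,β_p} sending β_j to α_{j+i} for each j (subscripts j+i reduced modulo p into {1,…,p}). Let S_p be the semigroup of partial transformations of Ω generated by X_{p,1},…,X_{p,p},W_{p,1},…,W_{p,p}. Then S_p is not strongly Mal'cev nilpotent, but every subsemigroup of S_p generated by at most 2p−1 elements is strongly Mal'cev nilpotent. (This is the key step in proving that the pseudovariety SMN of finite strongly Mal'cev nilpotent semigroups has infinite rank.) -/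
namespace SMN


/-- Partial transformations of `Ω`, composed left to right
(`f * g` means: first `f`, then `g`; `none` plays the role of `θ`). -/
def PT (Ω : Type*) := Ω → Option Ω

instance (Ω : Type*) : Mul (PT Ω) := ⟨fun f g x => (f x).bind g⟩

instance (Ω : Type*) : Semigroup (PT Ω) where
  mul_assoc f g h := by
    funext x
    change ((f x).bind g).bind h = (f x).bind fun a => (g a).bind h
    cases f x <;> rfl

/-- The points: `Sum.inl i` is `α_{i+1}` and `Sum.inr j` is `β_{j+1}`. -/
abbrev Pts (p : ℕ) := Fin p ⊕ Fin p

/-- `X_{p,i}`: the partial bijection sending `α_i` to `β_i` (0-indexed here). -/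
def Xgen (p : ℕ) (i : Fin p) : PT (Pts p) :=
  fun x => if x = Sum.inl i then some (Sum.inr i) else none

/-- `W_{p,i}`: the partial bijection sending `β_j` to `α_{j+i}` (subscripts mod `p`);
here `i : Fin p` stands for the 1-based index `i+1`, so `inr j ↦ inl (j + i + 1 mod p)`. -/
def Wgen (p : ℕ) (i : Fin p) : PT (Pts p) :=
  fun x =>
    match x with
    | Sum.inr j => some (Sum.inl ⟨(j.val + i.val + 1) % p, Nat.mod_lt _ j.pos⟩)
    | Sum.inl _ => none

/-- The semigroup `S_p` generated by the `X_{p,i}` and `W_{p,i}`. -/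
def Sp (p : ℕ) : Subsemigroup (PT (Pts p)) :=
  Subsemigroup.closure ({f | ∃ i, f = Xgen p i} ∪ {f | ∃ i, f = Wgen p i})

/-!
For the first part take `x_i = X_{p,i}` and `z_n = W_{p,n}`: by induction `λ_{n,i}` is the single
arrow `α_i ↦ β_{i-n}`, so the `λ_{n,i}` never coincide.

For the second part, every product of two elements of `S_p` has at most one point in its domain,
so from level `1` on each `λ_{n,i}` is zero or a single arrow; by the cyclic structure of the
sequence they are `a_i ↦ b_{i-n+1}`. One zero at some level makes the next level constantly zero,
and a constant level stays constant. Otherwise, as long as level `n + 1` is nonzero, the *links*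
`z_n (b_{m-n+1}) = a_{m+1}` hold for all `m`. When `b` is not constant, the links force
`z_n = W_{p,c_n}`, `a_m = α_{P m}`, `b_m = β_{Q m}` with `Q (m - n + 1) + c_n = P (m + 1)`.
Hence `Q` is an arithmetic progression mod `p` with nonzero step `δ` and `c_n` decreases by `δ`;
as `p` is prime, `P` hits every `α` and `c_1, …, c_p` every `W`. Every `W_{p,c}` in a
subsemigroup generated by `v` is itself some `v_i`, and every point in a domain lies in the domain
of some `v_i`, which leaves at least `2p` generators.
-/

open Fin.NatCast Fin.CommRing

section Monoid

variable {M N : Type*} [Monoid M] [Monoid N] {t : ℕ} [NeZero t]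

theorem foldl_mul_mul_eq_mul_prod (z : M) (g : ℕ → M) (l : List ℕ) (a : M) :
    l.foldl (fun acc j => acc * z * g j) a = a * (l.map fun j => z * g j).prod := by
  induction l generalizing a with
  | nil => simp
  | cons j l ih => rw [List.foldl_cons, ih, List.map_cons, List.prod_cons]; simp only [mul_assoc]

theorem mul_list_prod_mem (T : Subsemigroup M) {a : M} (ha : a ∈ T) {l : List M}
    (hl : ∀ x ∈ l, x ∈ T) : a * l.prod ∈ T := by
  induction l generalizing a with
  | nil => simpa using ha
  | cons x l ih =>
    rw [List.prod_cons, ← mul_assoc]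
    exact ih (T.mul_mem ha (hl x List.mem_cons_self)) fun y hy => hl y (List.mem_cons_of_mem x hy)

theorem cyc_eq_add (i : Fin t) (k : ℕ) : cyc i k = i + k :=
  Fin.ext <| by simp [cyc, Fin.val_add, Fin.val_natCast]

/-- `λ_{n+1,i}` in terms of `f = λ_{n,·}` and `ζ = z_{n+1}`. -/
def malcevStep (ζ : M) (f : Fin t → M) (i : Fin t) : M :=
  f i * ((List.range (t - 1)).map fun j => ζ * f (i + (j + 1 : ℕ))).prod

theorem slam_succ_apply (x : Fin t → M) (z : ℕ → M) (n : ℕ) (i : Fin t) :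
    slam x z (n + 1) i = malcevStep (z n) (slam x z n) i := by
  simp only [slam, malcevStep, foldl_mul_mul_eq_mul_prod, cyc_eq_add]

theorem map_malcevStep (F : M →* N) (ζ : M) (f : Fin t → M) (i : Fin t) :
    F (malcevStep ζ f i) = malcevStep (F ζ) (F ∘ f) i := by
  simp [malcevStep, map_list_prod, Function.comp_def]

theorem map_slam (F : M →* N) (x : Fin t → M) (z : ℕ → M) (n : ℕ) (i : Fin t) :
    F (slam x z n i) = slam (F ∘ x) (F ∘ z) n i := by
  induction n generalizing i with
  | zero => rfl
  | succ n ih =>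
    rw [slam_succ_apply, slam_succ_apply, map_malcevStep]
    exact congrArg (malcevStep _ · i) (funext ih)

theorem malcevStep_eq_of_forall_eq {ζ : M} {f : Fin t → M} (hf : ∀ i j, f i = f j) (i j : Fin t) :
    malcevStep ζ f i = malcevStep ζ f j := by
  have hf' : f = fun _ => f 0 := funext fun k => hf k 0
  rw [hf']
  rfl

theorem slam_eq_of_le {x : Fin t → M} {z : ℕ → M} {n m : ℕ} (hnm : n ≤ m)
    (h : ∀ i j, slam x z n i = slam x z n j) (i j : Fin t) : slam x z m i = slam x z m j := by
  induction m, hnm using Nat.le_induction generalizing i j with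
  | base => exact h i j
  | succ m _ ih =>
    rw [slam_succ_apply, slam_succ_apply]
    exact malcevStep_eq_of_forall_eq ih i j

theorem malcevStep_eq_mul_mul (ht : 2 ≤ t) (ζ : M) (f : Fin t → M) (i : Fin t) :
    ∃ r, malcevStep ζ f i = f i * (ζ * f (i + 1)) * r := by
  obtain ⟨s, hs⟩ : ∃ s, t - 1 = s + 1 := ⟨t - 2, by omega⟩
  rw [malcevStep, hs, List.prod_range_succ', zero_add, Nat.cast_one, ← mul_assoc]
  exact ⟨_, rfl⟩

theorem malcevStep_mem (T : Subsemigroup M) {ζ : M} (hζ : ζ = 1 ∨ ζ ∈ T) {f : Fin t → M}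
    (hf : ∀ i, f i ∈ T) (i : Fin t) : malcevStep ζ f i ∈ T := by
  refine mul_list_prod_mem T (hf i) ?_
  simp only [List.mem_map]
  rintro _ ⟨j, -, rfl⟩
  rcases hζ with rfl | hζ
  · simpa using hf _
  · exact T.mul_mem hζ (hf _)

theorem slam_mem (T : Subsemigroup M) {x : Fin t → M} (hx : ∀ i, x i ∈ T) {z : ℕ → M}
    (hz : ∀ k, z k = 1 ∨ z k ∈ T) (n : ℕ) (i : Fin t) : slam x z n i ∈ T := by
  induction n generalizing i with
  | zero => exact hx i
  | succ n ih => rw [slam_succ_apply]; exact malcevStep_mem T (hz n) ih i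

end Monoid

section MonoidWithZero

variable {M : Type*} [MonoidWithZero M] {t : ℕ} [NeZero t]

theorem malcevStep_eq_zero {ζ : M} {f : Fin t → M} {i₀ : Fin t} (h : f i₀ = 0) (i : Fin t) :
    malcevStep ζ f i = 0 := by
  by_cases hi : i = i₀
  · rw [malcevStep, hi, h, zero_mul]
  refine mul_eq_zero_of_right _ (List.prod_eq_zero (List.mem_map.2 ⟨(i₀ - i).val - 1, ?_, ?_⟩))
  · have : (i₀ - i).val ≠ 0 := fun h0 => hi (sub_eq_zero.1 (Fin.ext h0)).symm
    simp only [List.mem_range]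
    omega
  · have : (i₀ - i).val ≠ 0 := fun h0 => hi (sub_eq_zero.1 (Fin.ext h0)).symm
    rw [Nat.sub_add_cancel (Nat.one_le_iff_ne_zero.2 this), Fin.cast_val_eq_self,
      add_sub_cancel, h, mul_zero]

theorem slam_eq_zero_of_lt {x : Fin t → M} {z : ℕ → M} {n m : ℕ} {i₀ : Fin t}
    (h : slam x z n i₀ = 0) (hnm : n < m) (i : Fin t) : slam x z m i = 0 := by
  induction m, hnm using Nat.le_induction generalizing i with
  | base => rw [slam_succ_apply]; exact malcevStep_eq_zero h i
  | succ m _ ih => rw [slam_succ_apply]; exact malcevStep_eq_zero (ih 0) i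

end MonoidWithZero

section WithOne

variable {M : Type*} [Monoid M] {T : Subsemigroup M}

theorem withOne_lift_subtype_injective (hT : (1 : M) ∉ T) :
    Function.Injective (WithOne.lift (MulMemClass.subtype T)) := by
  intro x y h
  induction x using WithOne.recOneCoe with
  | one =>
    induction y using WithOne.recOneCoe with
    | one => rfl
    | coe b =>
      rw [WithOne.lift_one, WithOne.lift_coe] at h
      exact absurd (h ▸ b.prop) hT
  | coe a =>
    induction y using WithOne.recOneCoe with
    | one =>
      rw [WithOne.lift_one, WithOne.lift_coe] at h
      exact absurd (h ▸ a.prop) hT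
    | coe b =>
      rw [WithOne.lift_coe, WithOne.lift_coe] at h
      exact congrArg _ (Subtype.ext h)

theorem withOne_lift_subtype_eq_one_or_mem (w : WithOne T) :
    WithOne.lift (MulMemClass.subtype T) w = 1 ∨ WithOne.lift (MulMemClass.subtype T) w ∈ T := by
  induction w using WithOne.recOneCoe with
  | one => exact Or.inl rfl
  | coe a => exact Or.inr a.prop

end WithOne

section Rotation

variable {t : ℕ} [NeZero t]

theorem eq_of_apply_sub_one_eq {α : Type*} {f : Fin t → α} (h : ∀ m, f (m - 1) = f m)
    (m m' : Fin t) : f m = f m' := by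
  have key : ∀ k : ℕ, f (m - k) = f m := by
    intro k
    induction k with
    | zero => simp
    | succ k ih => rw [Nat.cast_succ, ← sub_sub, h, ih]
  have := key (m - m').val
  rwa [Fin.cast_val_eq_self, sub_sub_cancel, eq_comm] at this

theorem apply_sub_natCast_eq_add_nsmul {G : Type*} [AddCommGroup G] {f : Fin t → G} {δ : G}
    (h : ∀ m, f (m - 1) = f m + δ) (k : ℕ) (m : Fin t) : f (m - k) = f m + k • δ := by
  induction k with
  | zero => simp
  | succ k ih => rw [Nat.cast_succ, ← sub_sub, h, ih, succ_nsmul, add_assoc]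

end Rotation

namespace PT

variable {Ω : Type*}

theorem mul_apply (f g : PT Ω) (x : Ω) : (f * g) x = (f x).bind g := rfl

instance : MonoidWithZero (PT Ω) :=
  { (inferInstance : Semigroup (PT Ω)) with
    one := some
    zero := fun _ => none
    one_mul := fun _ => rfl
    mul_one := fun f => funext fun x => show (f x).bind some = f x by cases f x <;> rfl
    zero_mul := fun _ => rfl
    mul_zero := fun f => funext fun x =>
      show (f x).bind (fun _ => none) = none by cases f x <;> rfl }

theorem one_apply (x : Ω) : (1 : PT Ω) x = some x := rfl

theorem zero_apply (x : Ω) : (0 : PT Ω) x = none := rfl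

def dom (f : PT Ω) : Set Ω := {x | f x ≠ none}

theorem mem_dom {f : PT Ω} {x : Ω} : x ∈ f.dom ↔ f x ≠ none := Iff.rfl

theorem dom_mul_subset (f g : PT Ω) : (f * g).dom ⊆ f.dom := by
  intro x hx h
  apply hx
  rw [mul_apply, h]
  rfl

theorem exists_mem_dom_of_mem_closure {ι : Type*} {v : ι → PT Ω} {f : PT Ω}
    (hf : f ∈ Subsemigroup.closure (Set.range v)) {x : Ω} (hx : x ∈ f.dom) :
    ∃ i, x ∈ (v i).dom := by
  induction hf using Subsemigroup.closure_induction with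
  | mem f hf =>
    obtain ⟨i, rfl⟩ := hf
    exact ⟨i, hx⟩
  | mul f g _ _ ihf _ => exact ihf (dom_mul_subset f g hx)

variable [DecidableEq Ω]

def single (a b : Ω) : PT Ω := fun x => if x = a then some b else none

theorem single_apply_self (a b : Ω) : single a b a = some b := if_pos rfl

theorem single_apply_of_ne {x a : Ω} (h : x ≠ a) (b : Ω) : single a b x = none := if_neg h

theorem dom_single_subsingleton (a b : Ω) : (single a b).dom.Subsingleton := by
  intro x hx y hy
  by_contra hxy
  rcases eq_or_ne x a with rfl | hxa
  · exact hy (single_apply_of_ne (Ne.symm hxy) b)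
  · exact hx (single_apply_of_ne hxa b)

theorem single_mul_of_apply_eq_some {g : PT Ω} {b d : Ω} (a : Ω) (h : g b = some d) :
    single a b * g = single a d := by
  funext x
  by_cases hx : x = a
  · rw [hx, mul_apply, single_apply_self, single_apply_self]
    exact h
  · rw [mul_apply, single_apply_of_ne hx, single_apply_of_ne hx]
    rfl

theorem single_mul_of_apply_eq_none {g : PT Ω} {b : Ω} (a : Ω) (h : g b = none) :
    single a b * g = 0 := by
  funext x
  by_cases hx : x = a
  · rw [hx, mul_apply, single_apply_self]
    exact h
  · rw [mul_apply, single_apply_of_ne hx]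
    rfl

theorem mul_single_apply_of_eq {ζ : PT Ω} {b c : Ω} (h : ζ b = some c) (d : Ω) :
    (ζ * single c d) b = some d := by
  rw [mul_apply, h]
  exact single_apply_self c d

theorem mul_single_apply_of_ne {ζ : PT Ω} {b c : Ω} (h : ζ b ≠ some c) (d : Ω) :
    (ζ * single c d) b = none := by
  rw [mul_apply]
  cases hb : ζ b with
  | none => rfl
  | some e => exact single_apply_of_ne (fun he => h (hb.trans (congrArg some he))) d

theorem eq_single_of_dom_subsingleton {f : PT Ω} (h : f.dom.Subsingleton) (h0 : f ≠ 0) :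
    ∃ a b, f = single a b := by
  obtain ⟨a, ha⟩ : ∃ a, f a ≠ none := by
    by_contra! hf
    exact h0 (funext hf)
  obtain ⟨b, hb⟩ := Option.ne_none_iff_exists'.1 ha
  refine ⟨a, b, funext fun x => ?_⟩
  by_cases hx : x = a
  · rw [hx, hb, single_apply_self]
  · rw [single_apply_of_ne hx]
    by_contra hfx
    exact hx (h hfx ha)

end PT

open PT

section Chain

variable {Ω : Type*} [DecidableEq Ω] {t : ℕ} [NeZero t]

theorem malcevStep_single {ζ : PT Ω} {f : Fin t → PT Ω} {a b : Fin t → Ω}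
    (hf : ∀ m, f m = single (a m) (b m)) (hζ : ∀ m, ζ (b m) = some (a (m + 1))) (i : Fin t) :
    malcevStep ζ f i = single (a i) (b (i - 1)) := by
  have key : ∀ k : ℕ, f i * ((List.range k).map fun j => ζ * f (i + (j + 1 : ℕ))).prod
      = single (a i) (b (i + k)) := by
    intro k
    induction k with
    | zero => simp [hf]
    | succ k ih =>
      rw [List.prod_range_succ, ← mul_assoc, ih, hf, Nat.cast_succ, ← add_assoc]
      exact single_mul_of_apply_eq_some _ (mul_single_apply_of_eq (hζ _) _)
  rw [malcevStep, key, Nat.cast_pred (NeZero.pos t), Fin.natCast_self, zero_sub, ← sub_eq_add_neg]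

theorem apply_eq_some_of_malcevStep_ne_zero (ht : 2 ≤ t) {ζ : PT Ω} {f : Fin t → PT Ω}
    {a b : Fin t → Ω} (hf : ∀ m, f m = single (a m) (b m)) {m : Fin t}
    (h : malcevStep ζ f m ≠ 0) : ζ (b m) = some (a (m + 1)) := by
  by_contra hne
  obtain ⟨r, hr⟩ := malcevStep_eq_mul_mul ht ζ f m
  rw [hr, hf, hf, single_mul_of_apply_eq_none _ (mul_single_apply_of_ne hne _),
    zero_mul] at h
  exact h rfl

theorem slam_links (ht : 2 ≤ t) {ξ : Fin t → PT Ω} {ζ : ℕ → PT Ω} {a b : Fin t → Ω}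
    (h1 : ∀ i, slam ξ ζ 1 i = single (a i) (b i)) {K : ℕ} (hK : ∀ i, slam ξ ζ (K + 1) i ≠ 0) :
    ∀ ℓ < K, ∀ m, ζ (ℓ + 1) (b (m - ℓ)) = some (a (m + 1)) := by
  have hne : ∀ n ≤ K + 1, ∀ i, slam ξ ζ n i ≠ 0 := fun n hn i h0 =>
    hn.lt_or_eq.elim (fun hlt => hK 0 (slam_eq_zero_of_lt h0 hlt 0)) (fun heq => hK i (heq ▸ h0))
  have hlevel : ∀ ℓ ≤ K, ∀ i, slam ξ ζ (ℓ + 1) i = single (a i) (b (i - ℓ)) := by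
    intro ℓ hℓ
    induction ℓ with
    | zero => simpa using h1
    | succ ℓ ih =>
      have hlink : ∀ m, ζ (ℓ + 1) (b (m - ℓ)) = some (a (m + 1)) := fun m =>
        apply_eq_some_of_malcevStep_ne_zero ht (ih (by omega))
          (slam_succ_apply ξ ζ (ℓ + 1) m ▸ hne (ℓ + 2) (by omega) m)
      intro i
      rw [slam_succ_apply, malcevStep_single (ih (by omega)) hlink, Nat.cast_succ, add_comm,
        ← sub_sub]
  intro ℓ hℓ m
  exact apply_eq_some_of_malcevStep_ne_zero ht (hlevel ℓ hℓ.le)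
    (slam_succ_apply ξ ζ (ℓ + 1) m ▸ hne (ℓ + 2) (by omega) m)

theorem exists_ne_of_links {f : Fin t → PT Ω} {ζ : PT Ω} {a b : Fin t → Ω}
    (hf : ∀ i, f i = single (a i) (b i)) (hconst : ¬ ∀ i j, f i = f j)
    (hlink : ∀ m, ζ (b m) = some (a (m + 1))) : ∃ m m', b m ≠ b m' := by
  by_contra! hb
  have ha : ∀ m m', a m = a m' := fun m m' => by
    rw [← sub_add_cancel m 1, ← sub_add_cancel m' 1]
    exact Option.some_injective _ <| (hlink _).symm.trans (hb (m - 1) (m' - 1) ▸ hlink _)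
  exact hconst fun i j => by rw [hf, hf, ha i j, hb i j]

end Chain

section Generators

variable {p : ℕ}

theorem Wgen_apply_inl (c u : Fin p) : Wgen p c (Sum.inl u) = none := rfl

theorem inl_notMem_dom_Wgen (c u : Fin p) : Sum.inl u ∉ (Wgen p c).dom :=
  fun h => h (Wgen_apply_inl c u)

theorem Xgen_mem_Sp (i : Fin p) : Xgen p i ∈ Sp p :=
  Subsemigroup.subset_closure (Or.inl ⟨i, rfl⟩)

theorem Wgen_mem_Sp (c : Fin p) : Wgen p c ∈ Sp p :=
  Subsemigroup.subset_closure (Or.inr ⟨c, rfl⟩)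

variable [NeZero p]

theorem Wgen_apply_inr (c j : Fin p) : Wgen p c (Sum.inr j) = some (Sum.inl (j + c + 1)) := by
  simp [Wgen, Fin.ext_iff, Fin.val_add, Nat.add_mod]

theorem Wgen_apply_eq_some {c : Fin p} {x y : Pts p} (h : Wgen p c x = some y) :
    ∃ j, x = Sum.inr j ∧ y = Sum.inl (j + c + 1) := by
  rcases x with u | j
  · exact absurd h (by simp [Wgen_apply_inl])
  · rw [Wgen_apply_inr, Option.some_inj] at h
    exact ⟨j, rfl, h.symm⟩

theorem Wgen_injective : Function.Injective (Wgen p) := by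
  intro c d h
  have := congrFun h (Sum.inr 0)
  simpa [Wgen_apply_inr] using this

theorem Wgen_ne_one (c : Fin p) : Wgen p c ≠ 1 := fun h => by
  simpa [Wgen_apply_inl, one_apply] using congrFun h (Sum.inl 0)

theorem not_dom_subsingleton_Wgen (hp : 2 ≤ p) (c : Fin p) : ¬ (Wgen p c).dom.Subsingleton := by
  intro h
  have h01 := @h (Sum.inr 0) (by simp [mem_dom, Wgen_apply_inr]) (Sum.inr 1)
    (by simp [mem_dom, Wgen_apply_inr])
  simp only [Sum.inr.injEq, Fin.ext_iff, Fin.val_zero, Fin.val_one'] at h01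
  rw [Nat.one_mod_eq_one.2 (by omega)] at h01
  omega

theorem dom_subsingleton_mul_of_cases {f g : PT (Pts p)}
    (hf : f.dom.Subsingleton ∨ ∃ c, f = Wgen p c) (hg : g.dom.Subsingleton ∨ ∃ c, g = Wgen p c) :
    (f * g).dom.Subsingleton := by
  rcases hf with hf | ⟨c, rfl⟩
  · exact hf.anti (dom_mul_subset f g)
  intro x hx y hy
  obtain ⟨u, hxu⟩ := Option.ne_none_iff_exists'.1 (dom_mul_subset _ _ hx)
  obtain ⟨w, hyw⟩ := Option.ne_none_iff_exists'.1 (dom_mul_subset _ _ hy)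
  obtain ⟨j, rfl, rfl⟩ := Wgen_apply_eq_some hxu
  obtain ⟨k, rfl, rfl⟩ := Wgen_apply_eq_some hyw
  rw [mem_dom, mul_apply, hxu] at hx
  rw [mem_dom, mul_apply, hyw] at hy
  rcases hg with hg | ⟨d, rfl⟩
  · simpa using hg hx hy
  · exact (hx (Wgen_apply_inl d (j + c + 1))).elim

theorem mem_Sp_cases {f : PT (Pts p)} (hf : f ∈ Sp p) :
    f.dom.Subsingleton ∨ ∃ c, f = Wgen p c := by
  induction hf using Subsemigroup.closure_induction with
  | mem f hf =>
    rcases hf with ⟨i, rfl⟩ | hW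
    · exact Or.inl (dom_single_subsingleton (Sum.inl i) (Sum.inr i))
    · exact Or.inr hW
  | mul f g _ _ hf hg => exact Or.inl (dom_subsingleton_mul_of_cases hf hg)

theorem dom_subsingleton_mul {f g : PT (Pts p)} (hf : f ∈ Sp p) (hg : g ∈ Sp p) :
    (f * g).dom.Subsingleton :=
  dom_subsingleton_mul_of_cases (mem_Sp_cases hf) (mem_Sp_cases hg)

theorem one_notMem_Sp : (1 : PT (Pts p)) ∉ Sp p := by
  intro h
  rcases mem_Sp_cases h with h | ⟨c, hc⟩
  · exact Sum.inl_ne_inr (@h (Sum.inl 0) (by simp [mem_dom, one_apply]) (Sum.inr 0)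
      (by simp [mem_dom, one_apply]))
  · exact Wgen_ne_one c hc.symm

theorem dom_subsingleton_malcevStep {t : ℕ} [NeZero t] (ht : 2 ≤ t) {ζ : PT (Pts p)}
    (hζ : ζ = 1 ∨ ζ ∈ Sp p) {f : Fin t → PT (Pts p)} (hf : ∀ i, f i ∈ Sp p) (i : Fin t) :
    (malcevStep ζ f i).dom.Subsingleton := by
  obtain ⟨r, hr⟩ := malcevStep_eq_mul_mul ht ζ f i
  rw [hr]
  refine (dom_subsingleton_mul (hf i) ?_).anti (dom_mul_subset _ _)
  rcases hζ with rfl | hζ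
  · rw [one_mul]
    exact hf _
  · exact (Sp p).mul_mem hζ (hf _)

theorem mem_range_of_mem_closure {ι : Type*} {v : ι → PT (Pts p)} (hv : ∀ i, v i ∈ Sp p)
    {f : PT (Pts p)} (hf : f ∈ Subsemigroup.closure (Set.range v)) (h : ¬ f.dom.Subsingleton) :
    f ∈ Set.range v := by
  have hT : Subsemigroup.closure (Set.range v) ≤ Sp p :=
    Subsemigroup.closure_le.2 (Set.range_subset_iff.2 hv)
  induction hf using Subsemigroup.closure_induction with
  | mem f hf => exact hf
  | mul f g hf hg _ _ => exact absurd (dom_subsingleton_mul (hT hf) (hT hg)) h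

theorem two_mul_le_of_covers (hp : 2 ≤ p) {n : ℕ} {v : Fin n → PT (Pts p)} (hv : ∀ i, v i ∈ Sp p)
    (hdom : ∀ u, ∃ f ∈ Subsemigroup.closure (Set.range v), Sum.inl u ∈ f.dom)
    (hW : ∀ c, Wgen p c ∈ Subsemigroup.closure (Set.range v)) : 2 * p ≤ n := by
  choose α hα using fun u => (hdom u).elim fun f hf => exists_mem_dom_of_mem_closure hf.1 hf.2
  choose ω hω using fun c => mem_range_of_mem_closure hv (hW c) (not_dom_subsingleton_Wgen hp c)
  have hinj : Function.Injective (Sum.elim α ω) := by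
    rintro (u | c) (u' | c') h <;> simp only [Sum.elim_inl, Sum.elim_inr] at h
    · rcases mem_Sp_cases (hv (α u)) with hs | ⟨d, hd⟩
      · exact congrArg Sum.inl (Sum.inl_injective (hs (hα u) (h ▸ hα u')))
      · exact absurd (hd ▸ hα u) (inl_notMem_dom_Wgen d u)
    · have hu := hα u
      rw [h, hω c'] at hu
      exact absurd hu (inl_notMem_dom_Wgen c' u)
    · have hu := hα u'
      rw [← h, hω c] at hu
      exact absurd hu (inl_notMem_dom_Wgen c u')
    · exact congrArg Sum.inr (Wgen_injective ((hω c).symm.trans (h ▸ hω c')))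
  simpa [two_mul] using Fintype.card_le_of_injective _ hinj

theorem eq_one_or_eq_Wgen {ζ : PT (Pts p)} (hζ : ζ = 1 ∨ ζ ∈ Sp p) {x y : Pts p}
    (hx : x ∈ ζ.dom) (hy : y ∈ ζ.dom) (hxy : x ≠ y) : ζ = 1 ∨ ∃ c, ζ = Wgen p c :=
  hζ.imp_right fun h => (mem_Sp_cases h).resolve_left fun hs => hxy (hs hx hy)

theorem forall_exists_eq_Wgen_of_links {t : ℕ} [NeZero t] {K : ℕ} (hK : 2 ≤ K)
    {ζ : ℕ → PT (Pts p)} (hζ : ∀ k, ζ k = 1 ∨ ζ k ∈ Sp p) {a b : Fin t → Pts p}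
    (hb : ∃ m m', b m ≠ b m') (hlink : ∀ ℓ < K, ∀ m, ζ (ℓ + 1) (b (m - ℓ)) = some (a (m + 1))) :
    ∀ ℓ < K, ∃ c, ζ (ℓ + 1) = Wgen p c := by
  have hlink' : ∀ ℓ < K, ∀ m, ζ (ℓ + 1) (b m) = some (a (m + ℓ + 1)) := fun ℓ hℓ m => by
    simpa using hlink ℓ hℓ (m + ℓ)
  have hcases : ∀ ℓ < K, ζ (ℓ + 1) = 1 ∨ ∃ c, ζ (ℓ + 1) = Wgen p c := fun ℓ hℓ => by
    obtain ⟨m, m', hne⟩ := hb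
    exact eq_one_or_eq_Wgen (hζ _) (by simp [mem_dom, hlink' ℓ hℓ m])
      (by simp [mem_dom, hlink' ℓ hℓ m']) hne
  obtain ⟨ℓ₀, hℓ₀, c₀, hc₀⟩ : ∃ ℓ < K, ∃ c, ζ (ℓ + 1) = Wgen p c := by
    by_contra! hnone
    -- then `z_1 = z_2 = 1`, which makes `b` invariant under `m ↦ m - 1`
    have h1 : ∀ ℓ < K, ζ (ℓ + 1) = 1 := fun ℓ hℓ =>
      (hcases ℓ hℓ).resolve_right fun ⟨c, hc⟩ => hnone ℓ hℓ c hc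
    obtain ⟨m, m', hne⟩ := hb
    refine hne (eq_of_apply_sub_one_eq (fun m => Option.some_injective _ ?_) m m')
    have e0 := hlink' 0 (by omega) m
    have e1 := hlink' 1 (by omega) (m - 1)
    rw [h1 0 (by omega), one_apply] at e0
    rw [h1 1 (by omega), one_apply] at e1
    rw [e0, e1]
    simp
  -- the link through `W` puts `b` among the `β`s and `a` among the `α`s, which `1` cannot link
  intro ℓ hℓ
  refine (hcases ℓ hℓ).resolve_left fun h1 => ?_
  have e := hlink' ℓ hℓ 0
  obtain ⟨j, hj, -⟩ := Wgen_apply_eq_some (hc₀ ▸ hlink' ℓ₀ hℓ₀ 0)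
  obtain ⟨_, -, hu⟩ := Wgen_apply_eq_some (hc₀ ▸ hlink' ℓ₀ hℓ₀ (ℓ - ℓ₀))
  rw [h1, one_apply, hj, zero_add] at e
  rw [sub_add_cancel, ← Option.some_inj.1 e] at hu
  exact Sum.inr_ne_inl hu

theorem exists_index_links {t : ℕ} [NeZero t] {K : ℕ} (hK : 0 < K) {ζ : ℕ → PT (Pts p)}
    (hW : ∀ ℓ < K, ∃ c, ζ (ℓ + 1) = Wgen p c) {a b : Fin t → Pts p}
    (hlink : ∀ ℓ < K, ∀ m, ζ (ℓ + 1) (b (m - ℓ)) = some (a (m + 1))) :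
    ∃ (P Q : Fin t → Fin p) (c : ℕ → Fin p), (∀ m, a m = Sum.inl (P m)) ∧
      (∀ m, b m = Sum.inr (Q m)) ∧ (∀ ℓ < K, ζ (ℓ + 1) = Wgen p (c ℓ)) ∧
      ∀ ℓ < K, ∀ m, Q (m - ℓ) + (c ℓ + 1) = P (m + 1) := by
  have hW' : ∀ ℓ, ∃ c, ℓ < K → ζ (ℓ + 1) = Wgen p c := fun ℓ =>
    if hℓ : ℓ < K then (hW ℓ hℓ).imp fun _ h _ => h else ⟨0, fun h => absurd h hℓ⟩
  choose c hc using hW'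
  have hlink0 : ∀ m, Wgen p (c 0) (b m) = some (a (m + 1)) := fun m => by
    simpa [hc 0 hK] using hlink 0 hK m
  choose Q hQ using fun m => (Wgen_apply_eq_some (hlink0 m)).imp fun _ h => h.1
  have hP : ∀ m, ∃ u, a m = Sum.inl u := fun m => by
    obtain ⟨_, -, h⟩ := Wgen_apply_eq_some (hlink0 (m - 1))
    exact ⟨_, by rwa [sub_add_cancel] at h⟩
  choose P hP using hP
  refine ⟨P, Q, c, hP, hQ, hc, fun ℓ hℓ m => ?_⟩
  have e := hlink ℓ hℓ m
  rw [hc ℓ hℓ, hQ, hP, Wgen_apply_inr] at e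
  simpa [add_assoc] using e

end Generators

theorem slam_Xgen_Wgen {p : ℕ} [NeZero p] (n : ℕ) (i : Fin p) :
    slam (Xgen p) (fun k => Wgen p k) n i = single (Sum.inl i) (Sum.inr (i - n)) := by
  induction n generalizing i with
  | zero => simp only [Nat.cast_zero, sub_zero]; rfl
  | succ n ih =>
    rw [slam_succ_apply,
      malcevStep_single (a := Sum.inl) (b := fun m : Fin p => Sum.inr (m - (n : Fin p))) ih]
    · rw [Nat.cast_succ, add_comm, ← sub_sub]
    · intro m
      rw [Wgen_apply_inr, sub_add_cancel]

theorem not_stronglyMalcevNilpotent_Sp {p : ℕ} (hp : 2 ≤ p) : ¬ StronglyMalcevNilpotent (Sp p) := by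
  have : NeZero p := ⟨by omega⟩
  rintro ⟨n, -, h⟩
  have h01 := congrArg (WithOne.lift (MulMemClass.subtype (Sp p)))
    (h p hp (fun i => ⟨Xgen p i, Xgen_mem_Sp i⟩)
      (fun k => ((⟨Wgen p k, Wgen_mem_Sp _⟩ : Sp p) : WithOne (Sp p))) 0 1)
  simp only [map_slam, Function.comp_def, WithOne.lift_coe, MulMemClass.coe_subtype] at h01
  have h0 := congrFun h01 (Sum.inl 0)
  rw [slam_Xgen_Wgen, slam_Xgen_Wgen, single_apply_self, single_apply_of_ne] at h0
  · exact Option.some_ne_none _ h0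
  · simp [Fin.ext_iff]
    omega

theorem exists_lt_nsmul_eq {p : ℕ} [Fact p.Prime] {δ : Fin p} (hδ : δ ≠ 0) (w : Fin p) :
    ∃ k < p, k • δ = w := by
  have hcard : Nat.card (Fin p) = p := Nat.card_eq_fintype_card.trans (Fintype.card_fin p)
  obtain ⟨k, hk⟩ := (AddSubmonoid.mem_multiples_iff _ _).1
    (mem_multiples_of_prime_card hcard hδ (g' := w))
  have hpδ : p • δ = 0 := by
    have h := card_nsmul_eq_zero' (G := Fin p) (x := δ)
    rwa [hcard] at h
  have hmod := mod_addOrderOf_nsmul δ k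
  rw [addOrderOf_eq_prime hpδ hδ] at hmod
  exact ⟨k % p, Nat.mod_lt _ (Fact.out : p.Prime).pos, hmod.trans hk⟩

theorem surjective_of_links {p : ℕ} [Fact p.Prime] {t : ℕ} [NeZero t] {P Q : Fin t → Fin p}
    {c : ℕ → Fin p} {K : ℕ} (hK : p ≤ K) (hlink : ∀ ℓ < K, ∀ m, Q (m - ℓ) + c ℓ = P (m + 1))
    (hQ : ∃ m m', Q m ≠ Q m') : Function.Surjective P ∧ ∀ w, ∃ ℓ < K, c ℓ = w := by
  have hp := (Fact.out : p.Prime).two_le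
  have hlink0 : ∀ m, Q m + c 0 = P (m + 1) := fun m => by
    simpa using hlink 0 (by omega) m
  have hstep : ∀ m, Q (m - 1) = Q m + (c 0 - c 1) := fun m => by
    have h1 := hlink 1 (by omega) m
    rw [Nat.cast_one] at h1
    linear_combination h1 - hlink0 m
  have hiter := apply_sub_natCast_eq_add_nsmul hstep
  have hδ : c 0 - c 1 ≠ 0 := fun h0 => by
    obtain ⟨m, m', hne⟩ := hQ
    exact hne (eq_of_apply_sub_one_eq (fun m => by rw [hstep, h0, add_zero]) m m')
  refine ⟨fun u => ?_, fun w => ?_⟩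
  · obtain ⟨k, -, hk⟩ := exists_lt_nsmul_eq hδ (u - Q 0 - c 0)
    refine ⟨0 - k + 1, ?_⟩
    rw [← hlink0, hiter, hk]
    ring
  · obtain ⟨ℓ, hℓ, hk⟩ := exists_lt_nsmul_eq hδ (c 0 - w)
    refine ⟨ℓ, by omega, ?_⟩
    have h := hlink ℓ (by omega) 0
    rw [hiter, ← hlink0, hk] at h
    linear_combination h

theorem slam_eq_of_not_covers {p : ℕ} [Fact p.Prime] {T : Subsemigroup (PT (Pts p))}
    (hT : T ≤ Sp p) (hcov : ¬ ((∀ u, ∃ f ∈ T, Sum.inl u ∈ f.dom) ∧ ∀ c, Wgen p c ∈ T))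
    {t : ℕ} [NeZero t] (ht : 2 ≤ t) {ξ : Fin t → PT (Pts p)} (hξ : ∀ k, ξ k ∈ T)
    {ζ : ℕ → PT (Pts p)} (hζ : ∀ k, ζ k = 1 ∨ ζ k ∈ T) (i j : Fin t) :
    slam ξ ζ (p + 2) i = slam ξ ζ (p + 2) j := by
  have hp := (Fact.out : p.Prime).two_le
  by_cases hzero : ∃ i₀, slam ξ ζ (p + 1) i₀ = 0
  · obtain ⟨i₀, h⟩ := hzero
    rw [slam_eq_zero_of_lt h (by omega), slam_eq_zero_of_lt h (by omega)]
  by_cases hconst : ∀ i j, slam ξ ζ 1 i = slam ξ ζ 1 j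
  · exact slam_eq_of_le (by omega) hconst i j
  rw [not_exists] at hzero
  have hζSp : ∀ k, ζ k = 1 ∨ ζ k ∈ Sp p := fun k => (hζ k).imp_right (@hT _)
  obtain ⟨a, b, hab⟩ : ∃ a b : Fin t → Pts p, ∀ i, slam ξ ζ 1 i = single (a i) (b i) := by
    have hdom : ∀ i, (slam ξ ζ 1 i).dom.Subsingleton := fun i => by
      rw [slam_succ_apply]
      exact dom_subsingleton_malcevStep ht (hζSp 0) (fun k => hT (hξ k)) i
    choose a b hab using fun i => eq_single_of_dom_subsingleton (hdom i)
      (fun h0 => hzero 0 (slam_eq_zero_of_lt h0 (by omega) 0))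
    exact ⟨a, b, hab⟩
  have hlink := slam_links ht hab hzero
  have hb := exists_ne_of_links hab hconst (by simpa using hlink 0 (by omega))
  obtain ⟨P, Q, c, hP, hQ, hW, hPQ⟩ := exists_index_links (by omega)
    (forall_exists_eq_Wgen_of_links hp hζSp hb hlink) hlink
  obtain ⟨hPs, hcs⟩ := surjective_of_links le_rfl hPQ <| by
    obtain ⟨m, m', hne⟩ := hb
    exact ⟨m, m', fun h => hne (by rw [hQ, hQ, h])⟩
  refine (hcov ⟨fun u => ?_, fun w => ?_⟩).elim
  · obtain ⟨m, rfl⟩ := hPs u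
    refine ⟨_, slam_mem T hξ hζ 1 m, ?_⟩
    rw [hab, mem_dom, ← hP, single_apply_self]
    exact Option.some_ne_none _
  · obtain ⟨ℓ, hℓ, hcw⟩ := hcs (w + 1)
    rw [← add_right_cancel hcw, ← hW ℓ hℓ]
    exact (hζ (ℓ + 1)).resolve_left fun h1 => Wgen_ne_one _ ((hW ℓ hℓ).symm.trans h1)

theorem stronglyMalcevNilpotent_closure {p : ℕ} [Fact p.Prime] {v : Fin (2 * p - 1) → PT (Pts p)}
    (hv : ∀ i, v i ∈ Sp p) : StronglyMalcevNilpotent (Subsemigroup.closure (Set.range v)) := by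
  have hp := (Fact.out : p.Prime).two_le
  have hT : Subsemigroup.closure (Set.range v) ≤ Sp p :=
    Subsemigroup.closure_le.2 (Set.range_subset_iff.2 hv)
  have hcov : ¬ ((∀ u, ∃ f ∈ Subsemigroup.closure (Set.range v), Sum.inl u ∈ f.dom) ∧
      ∀ c, Wgen p c ∈ Subsemigroup.closure (Set.range v)) := fun ⟨hdom, hW⟩ => by
    have := two_mul_le_of_covers hp hv hdom hW
    omega
  refine ⟨p + 2, by omega, fun t ht x z i j => ?_⟩
  have : NeZero t := ⟨by omega⟩
  apply withOne_lift_subtype_injective fun h => one_notMem_Sp (hT h)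
  simp only [map_slam, Function.comp_def, WithOne.lift_coe]
  exact slam_eq_of_not_covers hT hcov ht (fun k => (x k).prop)
    (fun k => withOne_lift_subtype_eq_one_or_mem (z k)) i j

/-- For any prime `p`, the semigroup `S_p` (generated by the `2p` elements
`X_{p,1}, …, X_{p,p}, W_{p,1}, …, W_{p,p}`) is not strongly Mal'cev nilpotent, while every
subsemigroup of `S_p` generated by at most `2p − 1` elements is strongly Mal'cev
nilpotent. -/
theorem stmt12 (p : ℕ) (hp : p.Prime) :
    ¬ StronglyMalcevNilpotent (Sp p) ∧
      ∀ v : Fin (2 * p - 1) → PT (Pts p), (∀ i, v i ∈ Sp p) →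
        StronglyMalcevNilpotent (Subsemigroup.closure (Set.range v)) := by
  have : Fact p.Prime := ⟨hp⟩
  exact ⟨not_stronglyMalcevNilpotent_Sp hp.two_le, fun _ => stronglyMalcevNilpotent_closure⟩

end SMN
end

section
/- Let S be a finite block group all of whose subgroups are trivial. Suppose there exist ideals A, B of S with B ⊊ A such that the Rees quotient A/B is isomorphic to the inverse Rees matrix semigroup M = M⁰({1},q,q;I_q) over the trivial group (identify A/B with M), an integer t > 1, nonzero elements y_i = (1;α_i,β_i) ∈ M (1 ≤ i ≤ t) with α₁,…,α_t pairwise distinct, and elements v₁, v₂ ∈ S such that Γ(v₁)(β_k) = α_k for all 1 ≤ k ≤ t, and for some integer 1 ≤ i < t, Γ(v₂)(β_k) = α_{k+i} for all 1 ≤ k ≤ t (subscripts k+i reduced modulo t into {1,…,t}), where Γ is the ℒ_M-representation of S/B. Then neither v₁ nor v₂ is a regular element of S. -/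
namespace SMN

/-- Multiplication of the inverse Rees matrix semigroup `M⁰(G,q,q;I_q)`:
`(g;i,j)(g';i',j') = (gg';i,j')` if `j = i'`, and `θ` (= `none`) otherwise. -/
def reesMul {G : Type*} [Mul G] {q : ℕ} :
    Option (G × Fin q × Fin q) → Option (G × Fin q × Fin q) → Option (G × Fin q × Fin q)
  | some (g, i, j), some (g', i', j') => if j = i' then some (g * g', i, j') else none
  | _, _ => none

/-- A (two-sided) ideal of a semigroup. -/
def IsIdeal {S : Type*} [Semigroup S] (A : Set S) : Prop :=
  A.Nonempty ∧ ∀ a ∈ A, ∀ s : S, s * a ∈ A ∧ a * s ∈ A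

/-- `φ` identifies the Rees quotient `A/B` with the inverse Rees matrix semigroup
`M⁰(G,q,q;I_q)`: it sends exactly the complement of `A ∖ B` to the zero `θ = none`, is a
bijection from `A ∖ B` onto the nonzero elements, and is multiplicative on `A`. -/
def ReesIdent (S : Type*) [Semigroup S] (G : Type*) [Group G] (q : ℕ)
    (A B : Set S) (φ : S → Option (G × Fin q × Fin q)) : Prop :=
  (∀ a : S, φ a = none ↔ a ∉ A \ B) ∧
  (∀ a ∈ A \ B, ∀ b ∈ A \ B, φ a = φ b → a = b) ∧
  (∀ m : G × Fin q × Fin q, ∃ a ∈ A \ B, φ a = some m) ∧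
  (∀ a ∈ A, ∀ b ∈ A, φ (a * b) = reesMul (φ a) (φ b))

/-- `Γ(w)(j) = j'` for the `ℒ_M`-representation `Γ` of `S/B` under the identification `φ`:
right multiplication by `w` sends every nonzero `(g;i,j)` to some nonzero `(g';i,j')`. -/
def GammaMaps {S : Type*} [Semigroup S] {G : Type*} [Group G] {q : ℕ}
    (φ : S → Option (G × Fin q × Fin q)) (w : S) (j j' : Fin q) : Prop :=
  ∀ (a : S) (g : G) (i : Fin q), φ a = some (g, i, j) →
    ∃ g' : G, φ (a * w) = some (g', i, j')


/-!
If `v w v = v`, right multiplication by `w` undoes `Γ(v)` on the columns it reaches: if `b` lies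
in row `r` and `b v` in column `c` of the same row, and `a'` is the element at `(c, r)`, then
`v a'` is an inverse of both `b` and `b v w`, so `b v w = b` because inverses are unique. Hence,
if `v₁` (or `v₂`) were regular, `Γ(w v₂)` (or `Γ(w v₁)`) would shift the distinct columns `α k`
cyclically without a fixed point. But a finite semigroup with trivial subgroups is aperiodic: the
cyclic group at the bottom of `⟨z⟩` is trivial, so `z ^ (n + 1) = z ^ n` for some `n`, and right
multiplication by `z` must eventually fix a column.
-/

end SMN

open Function

theorem Function.exists_isPeriodicPt_iterate {α : Type*} [Finite α] (f : α → α) (x : α) :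
    ∃ N, IsPeriodicPt f (N + 1) (f^[N] x) := by
  obtain ⟨m, n, hmn, heq⟩ :=
    Set.finite_univ.exists_lt_map_eq_of_forall_mem (f := (f^[·] x)) fun _ => Set.mem_univ _
  set d := n - m
  have hm : IsPeriodicPt f d (f^[m] x) := by
    rw [IsPeriodicPt, IsFixedPt, ← iterate_add_apply, Nat.sub_add_cancel hmn.le, heq]
  have hle : m + 1 ≤ d * (m + 1) := Nat.le_mul_of_pos_left _ (by omega)
  refine ⟨d * (m + 1) - 1, ?_⟩
  rw [Nat.sub_add_cancel (by omega), show d * (m + 1) - 1 = (d * (m + 1) - 1 - m) + m by omega,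
    iterate_add_apply]
  exact (hm.apply_iterate _).mul_const _

namespace SMN

section RightTranslation

variable {S : Type*} [Semigroup S]

/- Powers in a semigroup without identity are written as orbits of right translation:
`(· * z)^[n] z = z ^ (n + 1)`. -/

theorem iterate_mul_right_succ (z s : S) (n : ℕ) :
    (· * z)^[n + 1] s = s * (· * z)^[n] z := by
  induction n with
  | zero => rfl
  | succ n ih => simp only [iterate_succ_apply' _ (n + 1), ih, iterate_succ_apply' _ n, mul_assoc]

theorem iterate_mul_right_mul (z : S) (m n : ℕ) :
    (· * z)^[m] z * (· * z)^[n] z = (· * z)^[n + 1 + m] z := by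
  rw [← iterate_mul_right_succ]
  exact (iterate_add_apply _ _ _ _).symm

theorem AllSubgroupsTrivial.isFixedPt_iterate_mul_right [Finite S]
    (htriv : AllSubgroupsTrivial S) {z : S} {N : ℕ}
    (hN : IsPeriodicPt (· * z) (N + 1) ((· * z)^[N] z)) :
    IsFixedPt (· * z) ((· * z)^[N] z) := by
  set f : S → S := (· * z)
  set e := f^[N] z
  set d := minimalPeriod f e
  have : NeZero d := ⟨(hN.minimalPeriod_pos N.succ_pos).ne'⟩
  -- `e` is idempotent, and `k ↦ e z ^ k` embeds `ℤ / d` into `S`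
  let ψ : Multiplicative (ZMod d) → S := fun k => f^[k.toAdd.val] e
  have hψ_mul : ∀ k l, ψ (k * l) = ψ k * ψ l := by
    intro k l
    calc ψ (k * l) = f^[k.toAdd.val + l.toAdd.val] e := by
          simp only [ψ, toAdd_mul, ZMod.val_add]
          exact iterate_mod_minimalPeriod_eq
      _ = f^[k.toAdd.val + l.toAdd.val] (f^[N + 1] e) := by rw [hN.eq]
      _ = f^[l.toAdd.val + N + 1 + (k.toAdd.val + N)] z := by
          simp only [e, ← iterate_add_apply]
          congr 1
          omega
      _ = ψ k * ψ l := by rw [← iterate_mul_right_mul, iterate_add_apply, iterate_add_apply]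
  have hψ_inj : Injective ψ := fun k l h =>
    Multiplicative.toAdd.injective <| ZMod.val_injective d <|
      iterate_injOn_Iio_minimalPeriod (ZMod.val_lt _) (ZMod.val_lt _) h
  have htrivial := htriv _ ψ hψ_mul hψ_inj
  have : Subsingleton (ZMod d) := ⟨fun a b =>
    Multiplicative.ofAdd.injective ((htrivial (.ofAdd a)).trans (htrivial (.ofAdd b)).symm)⟩
  exact minimalPeriod_eq_one_iff_isFixedPt.1 (ZMod.subsingleton_iff.1 this)

theorem AllSubgroupsTrivial.exists_iterate_mul_right_eq [Finite S]
    (htriv : AllSubgroupsTrivial S) (z : S) :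
    ∃ n, ∀ s : S, (· * z)^[n + 1] s = (· * z)^[n] s := by
  obtain ⟨N, hN⟩ := exists_isPeriodicPt_iterate (· * z) z
  refine ⟨N + 1, fun s => ?_⟩
  rw [iterate_mul_right_succ z s (N + 1), iterate_mul_right_succ z s N, iterate_succ_apply']
  exact congrArg (s * ·) (htriv.isFixedPt_iterate_mul_right hN)

end RightTranslation

theorem cyc_cyc {t : ℕ} (k : Fin t) (a b : ℕ) : cyc (cyc k a) b = cyc k (a + b) :=
  Fin.ext <| by simp only [cyc, Nat.mod_add_mod, Nat.add_assoc]

theorem cyc_self {t : ℕ} (k : Fin t) : cyc k t = k :=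
  Fin.ext <| by simp only [cyc, Nat.add_mod_right, Nat.mod_eq_of_lt k.isLt]

theorem cyc_ne_self {t i : ℕ} (hi : 1 ≤ i) (hit : i < t) (k : Fin t) : cyc k i ≠ k := by
  intro h
  have hmod : k.val + i ≡ k.val + 0 [MOD t] := by
    simpa [Nat.ModEq, cyc, Nat.mod_eq_of_lt k.isLt] using congrArg Fin.val h
  have := Nat.eq_zero_of_dvd_of_lt ((Nat.modEq_zero_iff_dvd).1 (hmod.add_left_cancel' _)) hit
  omega

section ReesMatrix

variable {S : Type*} [Semigroup S] {G : Type*} [Group G] {q : ℕ} {A B : Set S}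
  {φ : S → Option (G × Fin q × Fin q)}

namespace ReesIdent

theorem exists_preimage (hφ : ReesIdent S G q A B φ) (m : G × Fin q × Fin q) :
    ∃ a, φ a = some m :=
  let ⟨a, _, ha⟩ := hφ.2.2.1 m
  ⟨a, ha⟩

theorem exists_eq_some (hφ : ReesIdent S G q A B φ) {x : S} (hx : x ∈ A \ B) :
    ∃ m, φ x = some m :=
  Option.ne_none_iff_exists'.1 fun h => (hφ.1 x).1 h hx

theorem mem_of_eq_some (hφ : ReesIdent S G q A B φ) {x : S} {m : G × Fin q × Fin q}
    (hx : φ x = some m) : x ∈ A \ B := by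
  by_contra h
  simp [(hφ.1 x).2 h] at hx

theorem eq_of_eq_some (hφ : ReesIdent S G q A B φ) {x y : S} {m : G × Fin q × Fin q}
    (hx : φ x = some m) (hy : φ y = some m) : x = y :=
  hφ.2.1 x (hφ.mem_of_eq_some hx) y (hφ.mem_of_eq_some hy) (hx.trans hy.symm)

theorem mul_eq_some (hφ : ReesIdent S G q A B φ) {x y : S} {g g' : G} {i j k : Fin q}
    (hx : φ x = some (g, i, j)) (hy : φ y = some (g', j, k)) :
    φ (x * y) = some (g * g', i, k) := by
  rw [hφ.2.2.2 x (hφ.mem_of_eq_some hx).1 y (hφ.mem_of_eq_some hy).1, hx, hy]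
  simp [reesMul]

theorem eq_some_of_isInverseOf (hbg : BlockGroup S) (hφ : ReesIdent S G q A B φ) {x X : S}
    {g : G} {i j : Fin q} (hx : φ x = some (g, i, j)) (hX : IsInverseOf X x) :
    φ X = some (g⁻¹, j, i) := by
  obtain ⟨y, hy⟩ := hφ.exists_preimage (g⁻¹, j, i)
  have hy_inv : IsInverseOf y x :=
    ⟨hφ.eq_of_eq_some (by simpa using hφ.mul_eq_some (hφ.mul_eq_some hx hy) hx) hx,
      hφ.eq_of_eq_some (by simpa using hφ.mul_eq_some (hφ.mul_eq_some hy hx) hy) hy⟩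
  rw [hbg x X y hX hy_inv, hy]

theorem eq_of_isInverseOf (hbg : BlockGroup S) (hφ : ReesIdent S G q A B φ) {x x' X : S}
    (hx : x ∈ A \ B) (hx' : x' ∈ A \ B) (hX : IsInverseOf X x) (hX' : IsInverseOf X x') :
    x = x' := by
  obtain ⟨⟨g, i, j⟩, hxm⟩ := hφ.exists_eq_some hx
  obtain ⟨⟨g', i', j'⟩, hxm'⟩ := hφ.exists_eq_some hx'
  have h := (hφ.eq_some_of_isInverseOf hbg hxm hX).symm.trans
    (hφ.eq_some_of_isInverseOf hbg hxm' hX')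
  simp only [Option.some.injEq, Prod.mk.injEq, inv_inj] at h
  obtain ⟨rfl, rfl, rfl⟩ := h
  exact hφ.eq_of_eq_some hxm hxm'

end ReesIdent

theorem GammaMaps.mul {u u' : S} {j c c' : Fin q} (h : GammaMaps φ u j c)
    (h' : GammaMaps φ u' c c') : GammaMaps φ (u * u') j c' := by
  intro a g i ha
  obtain ⟨g₁, h₁⟩ := h a g i ha
  obtain ⟨g₂, h₂⟩ := h' _ g₁ i h₁
  exact ⟨g₂, by rwa [← mul_assoc]⟩

end ReesMatrix

section TrivialGroup

variable {S : Type*} [Semigroup S] {q : ℕ} {A B : Set S} {φ : S → Option (Unit × Fin q × Fin q)}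

theorem GammaMaps.eq_some {w a : S} {i j j' : Fin q} (h : GammaMaps φ w j j')
    (ha : φ a = some ((), i, j)) : φ (a * w) = some ((), i, j') :=
  (h a () i ha).choose_spec

theorem ReesIdent.mul_mul_eq_self (hbg : BlockGroup S) (hA : IsIdeal A) (hB : IsIdeal B)
    (hφ : ReesIdent S Unit q A B φ) {b v w : S} (hvw : v * w * v = v) {r c c' : Fin q}
    (hb : φ b = some ((), r, c)) (hbv : φ (b * v) = some ((), r, c')) :
    b * (v * w) = b := by
  obtain ⟨a', ha'⟩ := hφ.exists_preimage ((), c', r)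
  have h₁ : b * v * a' * b = b := hφ.eq_of_eq_some (hφ.mul_eq_some (hφ.mul_eq_some hbv ha') hb) hb
  have h₂ : a' * (b * v) * a' = a' :=
    hφ.eq_of_eq_some (hφ.mul_eq_some (hφ.mul_eq_some ha' hbv) ha') ha'
  have hinv : IsInverseOf (v * a') b := by
    constructor
    · simpa only [mul_assoc] using h₁
    · simpa only [mul_assoc] using congrArg (v * ·) h₂
  have hinv' : IsInverseOf (v * a') (b * (v * w)) := by
    constructor
    · calc b * (v * w) * (v * a') * (b * (v * w)) = b * (v * w * v) * a' * b * (v * w) := by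
            simp only [mul_assoc]
        _ = b * (v * w) := by rw [hvw, h₁]
    · calc v * a' * (b * (v * w)) * (v * a') = v * (a' * (b * (v * w * v)) * a') := by
            simp only [mul_assoc]
        _ = v * a' := by rw [hvw, h₂]
  have hmem : b * (v * w) ∈ A \ B := by
    refine ⟨(hA.2 b (hφ.mem_of_eq_some hb).1 _).2, fun hmemB => (hφ.mem_of_eq_some hbv).2 ?_⟩
    have hmemB' := (hB.2 _ hmemB v).2
    rwa [mul_assoc, hvw] at hmemB'
  exact hφ.eq_of_isInverseOf hbg hmem (hφ.mem_of_eq_some hb) hinv' hinv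

theorem GammaMaps.symm_of_mul_mul_eq (hbg : BlockGroup S) (hA : IsIdeal A) (hB : IsIdeal B)
    (hφ : ReesIdent S Unit q A B φ) {v w : S} (hvw : v * w * v = v) {j c : Fin q}
    (hv : GammaMaps φ v j c) : GammaMaps φ w c j := by
  rintro a ⟨⟩ r ha
  obtain ⟨c₀, hc₀⟩ := hφ.exists_preimage ((), c, j)
  have hb : φ (a * c₀) = some ((), r, j) := hφ.mul_eq_some ha hc₀
  have hbv : a * c₀ * v = a := hφ.eq_of_eq_some (hv.eq_some hb) ha
  refine ⟨(), ?_⟩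
  calc φ (a * w) = φ (a * c₀ * (v * w)) := by rw [← mul_assoc, hbv]
    _ = some ((), r, j) := by rw [hφ.mul_mul_eq_self hbg hA hB hvw hb (by rwa [hbv]), hb]

theorem ReesIdent.exists_isFixedPt_of_gammaMaps [Finite S] (htriv : AllSubgroupsTrivial S)
    (hφ : ReesIdent S Unit q A B φ) {ι : Type*} [Nonempty ι] {α : ι → Fin q}
    (hα : Injective α) {σ : ι → ι} {z : S} (hz : ∀ k, GammaMaps φ z (α k) (α (σ k))) :
    ∃ k, IsFixedPt σ k := by
  obtain ⟨k₀⟩ := ‹Nonempty ι›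
  obtain ⟨a, ha⟩ := hφ.exists_preimage ((), α k₀, α k₀)
  have horbit : ∀ n, φ ((· * z)^[n] a) = some ((), α k₀, α (σ^[n] k₀)) := by
    intro n
    induction n with
    | zero => exact ha
    | succ n ih =>
      rw [iterate_succ_apply', iterate_succ_apply']
      exact (hz _).eq_some ih
  obtain ⟨n, hn⟩ := htriv.exists_iterate_mul_right_eq z
  have h := horbit (n + 1)
  rw [hn a, horbit n, iterate_succ_apply'] at h
  simp only [Option.some.injEq, Prod.mk.injEq, true_and] at h
  exact ⟨σ^[n] k₀, (hα h).symm⟩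

end TrivialGroup

theorem stmt15_general (S : Type*) [Semigroup S] [Finite S]
    (hbg : BlockGroup S) (htriv : AllSubgroupsTrivial S)
    (A B : Set S) (hA : IsIdeal A) (hB : IsIdeal B)
    (q : ℕ) (φ : S → Option (Unit × Fin q × Fin q))
    (hφ : ReesIdent S Unit q A B φ)
    (t : ℕ)
    (α β : Fin t → Fin q)
    (hα : Function.Injective α)
    (v₁ v₂ : S)
    (hv₁ : ∀ k : Fin t, GammaMaps φ v₁ (β k) (α k))
    (hv₂ : ∃ i : ℕ, 1 ≤ i ∧ i < t ∧ ∀ k : Fin t, GammaMaps φ v₂ (β k) (α (cyc k i))) :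
    ¬ IsRegularElem v₁ ∧ ¬ IsRegularElem v₂ := by
  obtain ⟨i, hi, hit, hv₂⟩ := hv₂
  have : Nonempty (Fin t) := ⟨⟨0, by omega⟩⟩
  constructor
  · rintro ⟨w, hw⟩
    obtain ⟨k, hk⟩ := hφ.exists_isFixedPt_of_gammaMaps htriv hα (σ := (cyc · i)) fun k =>
      ((hv₁ k).symm_of_mul_mul_eq hbg hA hB hφ hw).mul (hv₂ k)
    exact cyc_ne_self hi hit k hk
  · rintro ⟨w, hw⟩
    obtain ⟨k, hk⟩ := hφ.exists_isFixedPt_of_gammaMaps htriv hα (σ := (cyc · (t - i))) fun k => by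
      have h := ((hv₂ (cyc k (t - i))).symm_of_mul_mul_eq hbg hA hB hφ hw).mul (hv₁ _)
      rwa [cyc_cyc, Nat.sub_add_cancel hit.le, cyc_self] at h
    exact cyc_ne_self (by omega) (by omega) k hk

/-- In a finite block group all of whose subgroups are trivial, given an ideal section
`A/B ≅ M⁰({1},q,q;I_q)` (trivial group, realized as `Unit`), nonzero elements
`y_i = (1;α_i,β_i)` with pairwise distinct `α_i`, and elements `v₁, v₂` acting on the
`ℒ`-classes by `Γ(v₁)(β_k) = α_k` and `Γ(v₂)(β_k) = α_{k+i}` for some `1 ≤ i < t`,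
neither `v₁` nor `v₂` is regular. -/
theorem stmt15 (S : Type*) [Semigroup S] [Finite S]
    (hbg : BlockGroup S) (htriv : AllSubgroupsTrivial S)
    (A B : Set S) (hA : IsIdeal A) (hB : IsIdeal B) (hBA : B ⊂ A)
    (q : ℕ) (φ : S → Option (Unit × Fin q × Fin q))
    (hφ : ReesIdent S Unit q A B φ)
    (t : ℕ) (ht : 1 < t)
    (y : Fin t → S) (α β : Fin t → Fin q)
    (hy : ∀ k : Fin t, φ (y k) = some ((), α k, β k))
    (hα : Function.Injective α)
    (v₁ v₂ : S)
    (hv₁ : ∀ k : Fin t, GammaMaps φ v₁ (β k) (α k))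
    (hv₂ : ∃ i : ℕ, 1 ≤ i ∧ i < t ∧ ∀ k : Fin t, GammaMaps φ v₂ (β k) (α (cyc k i))) :
    ¬ IsRegularElem v₁ ∧ ¬ IsRegularElem v₂ :=
  stmt15_general S hbg htriv A B hA hB q φ hφ t α β hα v₁ v₂ hv₁ hv₂

end SMN
end

section
/- Let n be a positive integer having at least two distinct prime divisors. Then there do not exist a finite set Q, permutations f_a and f_b of Q that generate a nilpotent subgroup of the symmetric group on Q, and pairwise distinct elements q₁,…,q_{n+1} ∈ Q such that f_a(q_i) = f_b(q_i) = q_{i+1} for all 1 ≤ i ≤ n−1, f_a(q_n) = q₁, and f_b(q_{n+1}) = q₁. (Equivalently: the inverse automaton A_n, and hence any inverse automaton containing A_n as a subgraph, is not G_nil-extendible, i.e., cannot be embedded into a complete automaton whose transition group is a finite nilpotent group.) -/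
/-!
A finite nilpotent group is the direct product of its Sylow subgroups, so for a prime `p` a
suitable power map `g ↦ g ^ e` (with `e ≡ 1` modulo the `p`-part of the order and `e ≡ 0`
modulo the rest) is the projection onto the `p`-component, hence a homomorphism.
Write `q₀, …, q_n` for the points of `A_n` and `r = p ^ v_p(n)`. Since `n` has a prime divisor
other than `p`, `r < n`, so `f_a ^ r` and `f_b ^ r` agree at `q₀`; applying the `e`-th power
map to `f_b ^ (-r) f_a ^ r` and using `n ∣ r e` gives `f_b ^ (r e) q₀ = q₀`. Thus the period
of `q₀` under `f_b` has `p`-adic valuation at most `v_p(n)` for every `p`, so it divides `n`.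
But `f_b ^ n q₀ = f_b q_{n-1} ≠ f_b q_n = q₀`.
-/

open Function MulAction

theorem Nat.ordProj_lt_of_dvd_of_prime {n p t : ℕ} (hn : n ≠ 0) (hp : p.Prime) (ht : t.Prime)
    (hpt : p ≠ t) (htn : t ∣ n) : ordProj[p] n < n := by
  have ht_compl : t ∣ ordCompl[p] n :=
    Nat.dvd_ordCompl_of_dvd_not_dvd htn fun h => hpt ((Nat.prime_dvd_prime_iff_eq hp ht).mp h)
  have hcompl : 1 < ordCompl[p] n :=
    ht.one_lt.trans_le (Nat.le_of_dvd (Nat.ordCompl_pos p hn) ht_compl)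
  calc ordProj[p] n < ordProj[p] n * ordCompl[p] n :=
        lt_mul_of_one_lt_right (Nat.ordProj_pos n p) hcompl
    _ = n := Nat.ordProj_mul_ordCompl_eq_self n p

theorem IsPGroup.pow_mul_distrib {q : ℕ} [Fact q.Prime] {H : Type*} [Group H] (hH : IsPGroup q H)
    {M p e : ℕ} (hM : M ≠ 0) (hp : p.Prime) (horder : ∀ z : H, orderOf z ∣ M)
    (he₁ : e ≡ 1 [MOD ordProj[p] M]) (he₀ : ordCompl[p] M ∣ e) (z w : H) :
    (z * w) ^ e = z ^ e * w ^ e := by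
  by_cases hqp : q = p
  · subst hqp
    suffices hid : ∀ z : H, z ^ e = z by rw [hid, hid, hid]
    intro z
    obtain ⟨k, hk⟩ := (IsPGroup.iff_orderOf.mp hH) z
    have hz : orderOf z ∣ ordProj[q] M := by
      rw [hk]
      exact Nat.pow_dvd_pow q
        ((hp.pow_dvd_iff_le_factorization hM).mp (hk ▸ horder z))
    rw [← pow_one z, ← pow_mul, one_mul, pow_eq_pow_iff_modEq]
    exact he₁.of_dvd hz
  · suffices htriv : ∀ z : H, z ^ e = 1 by rw [htriv, htriv, htriv, one_mul]
    intro z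
    obtain ⟨k, hk⟩ := (IsPGroup.iff_orderOf.mp hH) z
    have hpz : ¬ p ∣ orderOf z := by
      rw [hk]
      exact fun h => hqp ((Nat.prime_dvd_prime_iff_eq hp Fact.out).mp (hp.dvd_of_dvd_pow h)).symm
    exact orderOf_dvd_iff_pow_eq_one.mp
      ((Nat.dvd_ordCompl_of_dvd_not_dvd (horder z) hpz).trans he₀)

theorem Group.IsNilpotent.exists_pow_mul_distrib {G : Type*} [Group G] [Finite G]
    [Group.IsNilpotent G] {p s : ℕ} (hp : p.Prime) (hs : s.Coprime p) :
    ∃ e, ¬ p ∣ e ∧ s ∣ e ∧ ∀ g h : G, (g * h) ^ e = g ^ e * h ^ e := by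
  set M := Nat.card G
  have hM : M ≠ 0 := Nat.card_pos.ne'
  have hcop : (p * ordProj[p] M).Coprime (s * ordCompl[p] M) := by
    rw [← pow_succ']
    exact Nat.Coprime.pow_left _ (Nat.Coprime.mul_right hs.symm (Nat.coprime_ordCompl hp hM))
  obtain ⟨e, he₁, he₀⟩ := Nat.chineseRemainder hcop 1 0
  have he₀ : s * ordCompl[p] M ∣ e := Nat.modEq_zero_iff_dvd.mp he₀
  refine ⟨e, fun hpe => hp.not_dvd_one ?_, dvd_of_mul_right_dvd he₀, ?_⟩
  · exact Nat.modEq_zero_iff_dvd.mp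
      ((he₁.of_dvd (dvd_mul_right p _)).symm.trans (Nat.modEq_zero_iff_dvd.mpr hpe))
  · obtain ⟨φ⟩ := ((Group.isNilpotent_of_finite_tfae (G := G)).out 0 4).mp ‹_›
    have hfactor : ∀ (q : M.primeFactors) (P : Sylow q G) (z w : (P : Subgroup G)),
        (z * w) ^ e = z ^ e * w ^ e := fun q P =>
      haveI : Fact (q : ℕ).Prime := ⟨Nat.prime_of_mem_primeFactors q.2⟩
      P.isPGroup'.pow_mul_distrib hM hp
        (fun z => (Subgroup.orderOf_coe z).symm ▸ orderOf_dvd_natCard _)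
        (he₁.of_dvd (dvd_mul_left _ _)) (dvd_of_mul_left_dvd he₀)
    intro g h
    obtain ⟨x, rfl⟩ := φ.surjective g
    obtain ⟨y, rfl⟩ := φ.surjective h
    have hxy : (x * y) ^ e = x ^ e * y ^ e := funext fun q => funext fun P => by
      simpa using hfactor q P (x q P) (y q P)
    rw [← map_mul, ← map_pow, hxy, map_mul, map_pow, map_pow]

theorem Group.IsNilpotent.pow_smul_eq_self_of_forall_ordProj {G X : Type*} [Group G] [Finite G]
    [Group.IsNilpotent G] [MulAction G X] {a b : G} {x : X} {n : ℕ} (ha : a ^ n • x = x)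
    (hab : ∀ p, p.Prime → b ^ ordProj[p] n • x = a ^ ordProj[p] n • x) :
    b ^ n • x = x := by
  rcases eq_or_ne n 0 with rfl | hn
  · simp
  have hfix : ∀ p, p.Prime → ∃ e, ¬ p ∣ e ∧ b ^ (ordProj[p] n * e) • x = x := by
    intro p hp
    obtain ⟨e, hpe, hse, hpow⟩ :=
      exists_pow_mul_distrib (G := G) hp (Nat.coprime_ordCompl hp hn).symm
    have hc : (b ^ ordProj[p] n)⁻¹ * a ^ ordProj[p] n ∈ stabilizer G x := by
      rw [mem_stabilizer_iff, mul_smul, ← hab p hp, inv_smul_smul]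
    have hce := pow_mem hc e
    rw [hpow, inv_pow, ← pow_mul, ← pow_mul, mem_stabilizer_iff, mul_smul] at hce
    have ha' : a ^ (ordProj[p] n * e) • x = x := by
      refine pow_smul_eq_iff_minimalPeriod_dvd.mpr
        ((pow_smul_eq_iff_minimalPeriod_dvd.mp ha).trans ?_)
      conv_lhs => rw [← Nat.ordProj_mul_ordCompl_eq_self n p]
      exact mul_dvd_mul_left _ hse
    rw [ha', inv_smul_eq_iff] at hce
    exact ⟨e, hpe, hce.symm⟩
  have hm : minimalPeriod (b • ·) x ≠ 0 :=
    ne_zero_of_dvd_ne_zero (orderOf_pos b).ne'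
      (pow_smul_eq_iff_minimalPeriod_dvd.mp (by rw [pow_orderOf_eq_one, one_smul]))
  rw [pow_smul_eq_iff_minimalPeriod_dvd, ← Nat.factorization_prime_le_iff_dvd hm hn]
  intro p hp
  obtain ⟨e, hpe, hbe⟩ := hfix p hp
  have hre : ordProj[p] n * e ≠ 0 :=
    mul_ne_zero (Nat.ordProj_pos n p).ne' fun h => hpe (h ▸ dvd_zero p)
  calc (minimalPeriod (b • ·) x).factorization p
      ≤ (ordProj[p] n * e).factorization p :=
        (Nat.factorization_le_iff_dvd hm hre).mpr (pow_smul_eq_iff_minimalPeriod_dvd.mp hbe) p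
    _ = n.factorization p := by
        rw [Nat.factorization_mul (Nat.ordProj_pos n p).ne' (right_ne_zero_of_mul hre),
          Finsupp.add_apply, hp.factorization_pow, Finsupp.single_eq_same,
          Nat.factorization_eq_zero_of_not_dvd hpe, add_zero]

theorem Equiv.Perm.pow_apply_eq_of_path {α : Type*} {n : ℕ} (f : Equiv.Perm α)
    (q : Fin (n + 1) → α)
    (hf : ∀ i (h : i + 1 < n), f (q ⟨i, by omega⟩) = q ⟨i + 1, by omega⟩) :
    ∀ i (h : i < n), (f ^ i) (q 0) = q ⟨i, by omega⟩
  | 0, _ => rfl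
  | i + 1, h => by
    rw [pow_succ', Equiv.Perm.mul_apply, pow_apply_eq_of_path f q hf i (by omega), hf i h]

namespace SMN

/-- For `n` with at least two distinct prime divisors, there is no finite set `Q`,
permutations `f_a, f_b` of `Q` generating a nilpotent group, and distinct points
`q₁, …, q_{n+1}` (0-indexed below) with `f_a(q_i) = f_b(q_i) = q_{i+1}` for
`1 ≤ i ≤ n−1`, `f_a(q_n) = q₁` and `f_b(q_{n+1}) = q₁`; i.e. the inverse automaton
`A_n` is not `G_nil`-extendible. -/
theorem stmt17 (n : ℕ) (hn : 1 ≤ n)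
    (hpq : ∃ p q : ℕ, p.Prime ∧ q.Prime ∧ p ≠ q ∧ p ∣ n ∧ q ∣ n) :
    ¬ ∃ (Q : Type) (_ : Finite Q) (fa fb : Equiv.Perm Q),
        Group.IsNilpotent (Subgroup.closure {fa, fb} : Subgroup (Equiv.Perm Q)) ∧
        ∃ q : Fin (n + 1) → Q, Function.Injective q ∧
          (∀ i : ℕ, ∀ h : i + 1 < n,
            fa (q ⟨i, by omega⟩) = q ⟨i + 1, by omega⟩ ∧
            fb (q ⟨i, by omega⟩) = q ⟨i + 1, by omega⟩) ∧
          fa (q ⟨n - 1, by omega⟩) = q ⟨0, by omega⟩ ∧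
          fb (q ⟨n, by omega⟩) = q ⟨0, by omega⟩ := by
  rintro ⟨Q, _, fa, fb, hnil, q, hq, hstep, hfa, hfb⟩
  obtain ⟨p, t, hp, ht, hpt, hpn, htn⟩ := hpq
  let G := Subgroup.closure {fa, fb}
  let a : G := ⟨fa, Subgroup.subset_closure (by simp)⟩
  let b : G := ⟨fb, Subgroup.subset_closure (by simp)⟩
  have hsmul : ∀ (g : G) (k : ℕ) (y : Q), g ^ k • y = ((g : Equiv.Perm Q) ^ k) y :=
    fun _ _ _ => rfl
  have hwa := fa.pow_apply_eq_of_path q fun i h => (hstep i h).1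
  have hwb := fb.pow_apply_eq_of_path q fun i h => (hstep i h).2
  have hlast : ∀ f : Equiv.Perm Q, (f ^ n) (q 0) = f ((f ^ (n - 1)) (q 0)) := fun f => by
    rw [← Equiv.Perm.mul_apply, ← pow_succ', Nat.sub_add_cancel hn]
  have hbn : b ^ n • q 0 = q 0 := by
    refine Group.IsNilpotent.pow_smul_eq_self_of_forall_ordProj (a := a) ?_ fun ℓ hℓ => ?_
    · rw [hsmul, hlast, hwa _ (by omega)]
      exact hfa
    · have hr : ordProj[ℓ] n < n := by
        by_cases hℓp : ℓ = p
        · exact Nat.ordProj_lt_of_dvd_of_prime (by omega) hℓ ht (hℓp ▸ hpt) htn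
        · exact Nat.ordProj_lt_of_dvd_of_prime (by omega) hℓ hp hℓp hpn
      rw [hsmul, hsmul, hwa _ hr, hwb _ hr]
  rw [hsmul, hlast, hwb _ (by omega)] at hbn
  have hcoll : q ⟨n - 1, by omega⟩ = q ⟨n, by omega⟩ := fb.injective (hbn.trans hfb.symm)
  exact absurd (Fin.mk.inj_iff.mp (hq hcoll)) (by omega)

end SMN
end
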